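/- arXiv:1505.04524 — 4 statements merged into one kernel-verified Lean document; each statement's English description precedes it below -/
import Mathlib

section
/- For every h > 0 and every u ∈ C²([a, b]; ℂ) with u(a) = u(b) = 0, the following weighted energy identity holds: ∫_a^b |h (e^{Φ/h} u)'(s)|² ds + ∫_a^b (V(s) − (Φ'(s))²) e^{2Φ(s)/h} |u(s)|² ds = Re ∫_a^b (−h² u''(s) + V(s) u(s)) · e^{2Φ(s)/h} · conj(u(s)) ds, where Φ' denotes the almost-everywhere derivative of Φ. -/
/-!
With `v = e^{Φ/h} u` one has `h v' = e^{Φ/h} (Φ' u + h u')`. Expanding `|h v'|²` shows that at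
every point of `(a, b)` where `Φ` is differentiable, the left integrand equals the real part of
the right one plus `h²` times the derivative of the flux `e^{2Φ/h} Re (u' ū)`. The flux is the
product of a Lipschitz and a `C¹` function on `[a, b]`, hence absolutely continuous, so its
derivative integrates to its boundary values, which vanish since `u a = u b = 0`. Rademacher's
theorem makes the pointwise identity hold almost everywhere.
-/

open MeasureTheory Real intervalIntegral

open Set Topology Interval

theorem LipschitzOnWith.exists_lipschitzOnWith_comp_of_contDiff {X F : Type*}
    [PseudoEMetricSpace X] [NormedAddCommGroup F] [NormedSpace ℝ F] {g : ℝ → F}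
    (hg : ContDiff ℝ 1 g) {f : X → ℝ} {s : Set X} {K : NNReal} (hf : LipschitzOnWith K f s)
    (hs : IsCompact s) : ∃ L, LipschitzOnWith L (g ∘ f) s := by
  obtain ⟨M, hM⟩ := hs.exists_bound_of_continuousOn hf.continuousOn
  obtain ⟨L, hL⟩ :=
    hg.contDiffOn.exists_lipschitzOnWith one_ne_zero (convex_Icc (-M) M) isCompact_Icc
  exact ⟨L * K, hL.comp hf fun x hx => abs_le.1 (hM x hx)⟩

theorem ContDiffOn.hasDerivAt_derivWithin_Icc {E : Type*} [NormedAddCommGroup E]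
    [NormedSpace ℝ E] {u : ℝ → E} {a b s : ℝ} (hu : ContDiffOn ℝ 2 u (Icc a b))
    (hs : s ∈ Ioo a b) : HasDerivAt (derivWithin u (Icc a b)) (deriv (deriv u) s) s := by
  have hu' : ContDiffOn ℝ 1 (derivWithin u (Icc a b)) (Icc a b) :=
    hu.derivWithin (uniqueDiffOn_Icc (hs.1.trans hs.2)) (by norm_num)
  have hderiv : derivWithin u (Icc a b) =ᶠ[𝓝 s] deriv u := by
    filter_upwards [Ioo_mem_nhds hs.1 hs.2] with t ht
    exact derivWithin_of_mem_nhds (Icc_mem_nhds ht.1 ht.2)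
  rw [← hderiv.deriv_eq]
  exact ((hu'.differentiableOn one_ne_zero s (Ioo_subset_Icc_self hs)).differentiableAt
    (Icc_mem_nhds hs.1 hs.2)).hasDerivAt

theorem ContDiffOn.intervalIntegrable_deriv_deriv {E : Type*} [NormedAddCommGroup E]
    [NormedSpace ℝ E] {u : ℝ → E} {a b : ℝ} (hab : a < b) (hu : ContDiffOn ℝ 2 u (Icc a b)) :
    IntervalIntegrable (deriv (deriv u)) volume a b := by
  have hu'' : ContDiffOn ℝ 0 (derivWithin (derivWithin u (Icc a b)) (Icc a b)) (Icc a b) :=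
    (hu.derivWithin (m := 1) (uniqueDiffOn_Icc hab) (by norm_num)).derivWithin
      (uniqueDiffOn_Icc hab) (by norm_num)
  refine (hu''.continuousOn.mono (uIcc_of_le hab.le).le).intervalIntegrable.congr_uIoo
    fun s hs => ?_
  rw [uIoo_of_le hab.le] at hs
  exact (hu.hasDerivAt_derivWithin_Icc hs).hasDerivWithinAt.derivWithin
    (uniqueDiffOn_Icc hab s (Ioo_subset_Icc_self hs))

theorem LipschitzOnWith.intervalIntegrable_deriv_mul {f g : ℝ → ℝ} {a b : ℝ} {K : NNReal}
    (hab : a ≤ b) (hf : LipschitzOnWith K f (Icc a b)) (hg : IntervalIntegrable g volume a b) :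
    IntervalIntegrable (fun s => deriv f s * g s) volume a b := by
  have hbound : ∀ᵐ s ∂volume.restrict (Ι a b), ‖deriv f s‖ ≤ K := by
    rw [uIoc_of_le hab, ← restrict_Ioo_eq_restrict_Ioc]
    exact ae_restrict_of_forall_mem measurableSet_Ioo fun s hs =>
      norm_deriv_le_of_lipschitzOn (Icc_mem_nhds hs.1 hs.2) hf
  exact intervalIntegrable_iff.2
    (hg.def'.bdd_mul (measurable_deriv f).aestronglyMeasurable hbound)

theorem LipschitzOnWith.intervalIntegrable_sub_deriv_sq_mul {V f w : ℝ → ℝ} {a b : ℝ}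
    {K : NNReal} (hab : a ≤ b) (hV : ContinuousOn V (uIcc a b))
    (hf : LipschitzOnWith K f (Icc a b)) (hw : ContinuousOn w (uIcc a b)) :
    IntervalIntegrable (fun s => (V s - deriv f s ^ 2) * w s) volume a b := by
  have hfw := hf.intervalIntegrable_deriv_mul hab hw.intervalIntegrable
  convert (hV.fun_mul hw).intervalIntegrable.sub (hf.intervalIntegrable_deriv_mul hab hfw) using 1
  funext s
  ring

theorem integral_add_eq_re_integral_of_ae_eq {f₁ f₂ d : ℝ → ℝ} {g : ℝ → ℂ} {a b : ℝ} (c : ℝ)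
    (hf₂ : IntervalIntegrable f₂ volume a b) (hg : IntervalIntegrable g volume a b)
    (hd : IntervalIntegrable d volume a b) (hd₀ : ∫ s in a..b, d s = 0)
    (heq : ∀ᵐ s, s ∈ Ι a b → f₁ s + f₂ s = (g s).re + c * d s) :
    (∫ s in a..b, f₁ s) + ∫ s in a..b, f₂ s = (∫ s in a..b, g s).re := by
  have hgre : IntervalIntegrable (fun s => (g s).re) volume a b :=
    intervalIntegrable_iff.2 hg.def'.re
  have hf₁ : IntervalIntegrable f₁ volume a b :=
    ((hgre.add (hd.const_mul c)).sub hf₂).congr_ae <| (ae_restrict_iff' measurableSet_uIoc).2 <|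
      heq.mono fun s hs hsI => by linarith [hs hsI]
  rw [← integral_add hf₁ hf₂, integral_congr_ae heq, integral_add hgre (hd.const_mul c),
    intervalIntegral.integral_const_mul, hd₀, mul_zero, add_zero]
  exact intervalIntegral_re hg

theorem norm_sq_weighted_deriv_add_eq (h φ V E : ℝ) (hh : h ≠ 0) (U P Q : ℂ) :
    ‖(h : ℂ) * ((E * (φ / h) : ℝ) * U + (E : ℂ) * P)‖ ^ 2 + (V - φ ^ 2) * E ^ 2 * ‖U‖ ^ 2
      = ((-(h : ℂ) ^ 2 * Q + V * U) * ((E ^ 2 : ℝ) : ℂ) * (starRingEnd ℂ) U).re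
        + h ^ 2 * (E ^ 2 * (2 * φ / h) * (P * (starRingEnd ℂ) U).re
          + E ^ 2 * (Q * (starRingEnd ℂ) U + P * (starRingEnd ℂ) P).re) := by
  simp only [Complex.sq_norm, Complex.normSq_apply, Complex.add_re, Complex.add_im,
    Complex.mul_re, Complex.mul_im, Complex.ofReal_re, Complex.ofReal_im, Complex.neg_re,
    Complex.neg_im, Complex.conj_re, Complex.conj_im, ← Complex.ofReal_pow]
  field_simp
  ring

/-- `derivWithin` keeps the flux continuous up to the endpoints, where `deriv u` may be junk. -/
noncomputable def weightedFlux (a b h : ℝ) (Φ : ℝ → ℝ) (u : ℝ → ℂ) (t : ℝ) : ℝ :=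
  exp (2 * Φ t / h) * (derivWithin u (Icc a b) t * (starRingEnd ℂ) (u t)).re

theorem absolutelyContinuousOnInterval_weightedFlux {a b h : ℝ} {Φ : ℝ → ℝ} {u : ℝ → ℂ}
    {K : NNReal} (hab : a < b) (hΦ : LipschitzOnWith K Φ (Icc a b))
    (hu : ContDiffOn ℝ 2 u (Icc a b)) :
    AbsolutelyContinuousOnInterval (weightedFlux a b h Φ u) a b := by
  have hI : uIcc a b ⊆ Icc a b := (uIcc_of_le hab.le).le
  obtain ⟨L, hweight⟩ := hΦ.exists_lipschitzOnWith_comp_of_contDiff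
    (g := fun r => exp (2 * r / h)) (by fun_prop) isCompact_Icc
  have hflux : ContDiffOn ℝ 1
      (fun t => (derivWithin u (Icc a b) t * (starRingEnd ℂ) (u t)).re) (Icc a b) :=
    Complex.reCLM.contDiff.comp_contDiffOn
      ((hu.derivWithin (uniqueDiffOn_Icc hab) (by norm_num)).mul
        (Complex.conjCLE.contDiff.comp_contDiffOn (hu.of_le one_le_two)))
  exact (hweight.mono hI).absolutelyContinuousOnInterval.fun_mul
    (hflux.mono hI).absolutelyContinuousOnInterval

theorem energy_density_eq_re_add_deriv_weightedFlux {a b h s : ℝ} {V Φ : ℝ → ℝ} {u : ℝ → ℂ}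
    (hh : h ≠ 0) (hu : ContDiffOn ℝ 2 u (Icc a b)) (hs : s ∈ Ioo a b)
    (hΦ : DifferentiableAt ℝ Φ s) :
    ‖(h : ℂ) * deriv (fun t => (exp (Φ t / h) : ℂ) * u t) s‖ ^ 2
      + (V s - deriv Φ s ^ 2) * exp (2 * Φ s / h) * ‖u s‖ ^ 2
    = ((-(h : ℂ) ^ 2 * deriv (deriv u) s + (V s : ℂ) * u s) * (exp (2 * Φ s / h) : ℂ)
        * (starRingEnd ℂ) (u s)).re
      + h ^ 2 * deriv (weightedFlux a b h Φ u) s := by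
  have hIcc : Icc a b ∈ 𝓝 s := Icc_mem_nhds hs.1 hs.2
  have hu₁ : HasDerivAt u (deriv u s) s :=
    ((hu.differentiableOn two_ne_zero s (Ioo_subset_Icc_self hs)).differentiableAt
      hIcc).hasDerivAt
  have hu₂ := hu.hasDerivAt_derivWithin_Icc hs
  have hΦ' := hΦ.hasDerivAt
  have hv := ((hΦ'.div_const h).exp.ofReal_comp).fun_mul hu₁
  have hflux : HasDerivAt (weightedFlux a b h Φ u)
      (exp (2 * Φ s / h) * (2 * deriv Φ s / h) * (deriv u s * (starRingEnd ℂ) (u s)).re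
        + exp (2 * Φ s / h) * (deriv (deriv u) s * (starRingEnd ℂ) (u s)
          + deriv u s * (starRingEnd ℂ) (deriv u s)).re) s := by
    have := ((hΦ'.const_mul 2).div_const h).exp.fun_mul
      (Complex.reCLM.hasFDerivAt.comp_hasDerivAt s (hu₂.fun_mul hu₁.star))
    simp only [Function.comp_apply, derivWithin_of_mem_nhds hIcc] at this
    exact this
  rw [hv.deriv, hflux.deriv, show exp (2 * Φ s / h) = exp (Φ s / h) ^ 2 by
    rw [← exp_nat_mul]; ring_nf]
  exact norm_sq_weighted_deriv_add_eq h (deriv Φ s) (V s) _ hh (u s) (deriv u s)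
    (deriv (deriv u) s)

/-- Weighted energy identity (key step of the Agmon estimates, Proposition 2.3):
for `u ∈ C²([a,b];ℂ)` vanishing at the endpoints and `Φ` Lipschitz,
`∫ |h (e^{Φ/h}u)'|² + ∫ (V − (Φ')²) e^{2Φ/h} |u|² = Re ∫ (−h²u'' + Vu) e^{2Φ/h} conj(u)`. -/
theorem stmt_6 (a b : ℝ) (hab : a < b) (V : ℝ → ℝ) (Φ : ℝ → ℝ)
    (hV : ContinuousOn V (Set.Icc a b))
    (K : NNReal) (hΦ : LipschitzOnWith K Φ (Set.Icc a b))
    (h : ℝ) (hh : 0 < h) (u : ℝ → ℂ)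
    (hu : ContDiffOn ℝ 2 u (Set.Icc a b))
    (hua : u a = 0) (hub : u b = 0) :
    (∫ s in a..b, ‖(h : ℂ) * deriv (fun t => (Real.exp (Φ t / h) : ℂ) * u t) s‖ ^ 2)
      + (∫ s in a..b, (V s - (deriv Φ s) ^ 2) * Real.exp (2 * Φ s / h) * ‖u s‖ ^ 2)
    = (∫ s in a..b, (-(h : ℂ) ^ 2 * deriv (deriv u) s + (V s : ℂ) * u s)
        * (Real.exp (2 * Φ s / h) : ℂ) * (starRingEnd ℂ) (u s)).re := by
  have hI : uIcc a b ⊆ Icc a b := (uIcc_of_le hab.le).le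
  have hVc := hV.mono hI
  have hΦc := hΦ.continuousOn.mono hI
  have huc := hu.continuousOn.mono hI
  have hweight : ContinuousOn (fun s => exp (2 * Φ s / h) * ‖u s‖ ^ 2) (uIcc a b) := by
    fun_prop
  have hF := absolutelyContinuousOnInterval_weightedFlux (h := h) hab hΦ hu
  refine integral_add_eq_re_integral_of_ae_eq (h ^ 2) ?_ ?_ hF.intervalIntegrable_deriv ?_ ?_
  · simpa only [mul_assoc] using hΦ.intervalIntegrable_sub_deriv_sq_mul hab.le hVc hweight
  · have hVu : ContinuousOn (fun s => (V s : ℂ) * u s) (uIcc a b) := by fun_prop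
    have hconj : ContinuousOn (fun s => (starRingEnd ℂ) (u s)) (uIcc a b) := by fun_prop
    have hexp : ContinuousOn (fun s => (exp (2 * Φ s / h) : ℂ)) (uIcc a b) := by fun_prop
    exact ((((hu.intervalIntegrable_deriv_deriv hab).const_mul _).add
      hVu.intervalIntegrable).mul_continuousOn hexp).mul_continuousOn hconj
  · rw [hF.integral_deriv_eq_sub]
    simp [weightedFlux, hua, hub]
  · filter_upwards [(hΦ.mono hI).absolutelyContinuousOnInterval.ae_differentiableAt,
      Measure.ae_ne volume b] with s hdiff hsb hs
    rw [uIoc_of_le hab.le] at hs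
    have hs' : s ∈ Ioo a b := ⟨hs.1, hs.2.lt_of_ne hsb⟩
    exact energy_density_eq_re_add_deriv_weightedFlux hh.ne' hu hs'
      (hdiff (Icc_subset_uIcc (Ioo_subset_Icc_self hs')))
end

section
/- For every N ∈ ℕ* and h ∈ (0, 1), the weight Φ̃_{N,h} = Φ_r − N h ln(max(Φ_r/h, N)) is Lipschitz on [−(π−η), π−η] and satisfies: (i) on the set {Φ_r < N h} one has (Φ̃_{N,h}')² = (Φ_r')² = V almost everywhere; (ii) on the set {Φ_r ≥ N h} one has, almost everywhere, V − (Φ̃_{N,h}')² = V · (N h/Φ_r) · (2 − N h/Φ_r) ≥ N h · (V/Φ_r) ≥ N m h ≥ 0; (iii) consequently, with R = √(N/c₀), V − (Φ̃_{N,h}')² ≥ 0 almost everywhere on B and V − (Φ̃_{N,h}')² ≥ N m h almost everywhere on {s ∈ B : |s| ≥ R h^{1/2}}. (Proposition 2.4 (b), precised weight.) -/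
/-!
Write `Φ̃ = w ∘ Φ_r` with `w x = x - N h log (max (x / h) N)`. The map `w` is a translation below
`N h` and has derivative `1 - N h / x` above it; it is `2`-Lipschitz, and `Φ_r` is Lipschitz
because `√V` is bounded, so `Φ̃` is Lipschitz. Off the level set `{Φ_r = N h}` the chain rule
gives `Φ̃' = (1 - t) Φ_r'` with `t = N h / Φ_r ∈ (0, 1)` above the threshold, hence
`V - Φ̃'² = V t (2 - t) ≥ V t ≥ N m h`. The level set is null: at each of its points `Φ_r` has a
nonzero derivative (`V > 0` away from the origin), so its points are isolated and countable.
-/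

open MeasureTheory Real Set Filter Topology

lemma log_sub_log_le_sub_div {a b c : ℝ} (hc : 0 < c) (hca : c ≤ a) (hab : a ≤ b) :
    Real.log b - Real.log a ≤ (b - a) / c := by
  have ha : 0 < a := hc.trans_le hca
  have hb : 0 < b := ha.trans_le hab
  calc Real.log b - Real.log a = Real.log (b / a) := (Real.log_div hb.ne' ha.ne').symm
    _ ≤ b / a - 1 := Real.log_le_sub_one_of_pos (div_pos hb ha)
    _ = (b - a) / a := by field_simp
    _ ≤ (b - a) / c := div_le_div_of_nonneg_left (by linarith) hc hca

lemma abs_log_sub_log_le {a b c : ℝ} (hc : 0 < c) (hca : c ≤ a) (hcb : c ≤ b) :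
    |Real.log a - Real.log b| ≤ |a - b| / c := by
  rcases le_total a b with hab | hba
  · rw [abs_sub_comm, abs_sub_comm a,
      abs_of_nonneg (sub_nonneg.2 (Real.log_le_log (hc.trans_le hca) hab)),
      abs_of_nonneg (sub_nonneg.2 hab)]
    exact log_sub_log_le_sub_div hc hca hab
  · rw [abs_of_nonneg (sub_nonneg.2 (Real.log_le_log (hc.trans_le hcb) hba)),
      abs_of_nonneg (sub_nonneg.2 hba)]
    exact log_sub_log_le_sub_div hc hcb hba

section Primitive

variable {g : ℝ → ℝ} {a b c : ℝ}

lemma lipschitzOnWith_primitive (hg : ContinuousOn g (Icc a b)) (hc : c ∈ Icc a b) :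
    ∃ K, LipschitzOnWith K (fun x => ∫ t in c..x, g t) (Icc a b) := by
  obtain ⟨M, hM⟩ := isCompact_Icc.exists_bound_of_continuousOn hg
  have hint : ∀ x ∈ Icc a b, IntervalIntegrable g volume c x := fun x hx =>
    (hg.mono (uIcc_subset_Icc hc hx)).intervalIntegrable
  refine ⟨M.toNNReal, LipschitzOnWith.of_dist_le_mul fun x hx y hy => ?_⟩
  rw [dist_eq_norm, intervalIntegral.integral_interval_sub_left (hint x hx) (hint y hy),
    Real.dist_eq]
  refine (intervalIntegral.norm_integral_le_of_norm_le_const fun t ht =>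
    hM t (uIcc_subset_Icc hy hx (uIoc_subset_uIcc ht))).trans ?_
  rw [abs_sub_comm]
  exact mul_le_mul_of_nonneg_right (Real.le_coe_toNNReal M) (abs_nonneg _)

lemma hasDerivAt_primitive (hg : ContinuousOn g (Icc a b)) (hc : c ∈ Icc a b) {s : ℝ}
    (hs : s ∈ Ioo a b) : HasDerivAt (fun x => ∫ t in c..x, g t) (g s) s :=
  intervalIntegral.integral_hasDerivAt_right
    (hg.mono (uIcc_subset_Icc hc (Ioo_subset_Icc_self hs))).intervalIntegrable
    ((hg.mono Ioo_subset_Icc_self).stronglyMeasurableAtFilter isOpen_Ioo s hs)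
    (hg.continuousAt (Icc_mem_nhds hs.1 hs.2))

lemma exists_hasDerivAt_abs_primitive_sqrt {V : ℝ → ℝ} (hV : ContinuousOn V (Icc a b))
    (hV0 : ∀ s ∈ Icc a b, 0 ≤ V s) (hc : c ∈ Icc a b) {s : ℝ} (hs : s ∈ Ioo a b)
    (hne : ∫ t in c..s, √(V t) ≠ 0) :
    ∃ d, HasDerivAt (fun x => |∫ t in c..x, √(V t)|) d s ∧ d ^ 2 = V s := by
  have hF := hasDerivAt_primitive hV.sqrt hc hs
  have hΦ := (hasDerivAt_abs hne).comp s hF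
  refine ⟨_, hΦ, ?_⟩
  rw [mul_pow, sq_sqrt (hV0 s (Ioo_subset_Icc_self hs))]
  rcases hne.lt_or_gt with hneg | hpos
  · simp [sign_neg hneg]
  · simp [sign_pos hpos]

end Primitive

lemma countable_setOf_eq_of_hasDerivAt_ne_zero {f : ℝ → ℝ} {S : Set ℝ} {y : ℝ}
    (hf : ∀ x ∈ S, f x = y → ∃ d ≠ 0, HasDerivAt f d x) : {x ∈ S | f x = y}.Countable := by
  refine (HereditarilyLindelofSpace.isLindelof _).countable_of_isDiscrete
    (isDiscrete_iff_nhdsNE.mpr ?_)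
  rintro x ⟨hxS, hxy⟩
  obtain ⟨d, hd, hfd⟩ := hf x hxS hxy
  rw [inf_principal_eq_bot]
  filter_upwards [hfd.eventually_ne (c := y) hd] with z hz using fun hz' => hz hz'.2

lemma le_mul_sq_of_sqrt_div_mul_sqrt_le_abs {c N h s : ℝ} (hc : 0 < c) (hN : 0 ≤ N) (hh : 0 ≤ h)
    (hs : √(N / c) * √h ≤ |s|) : N * h ≤ c * s ^ 2 := by
  have hsq := pow_le_pow_left₀ (by positivity) hs 2
  rw [mul_pow, sq_sqrt (by positivity), sq_sqrt hh, sq_abs] at hsq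
  calc N * h = c * (N / c * h) := by field_simp
    _ ≤ c * s ^ 2 := mul_le_mul_of_nonneg_left hsq hc.le

lemma eikonal_defect_bounds {V d Φ N h m : ℝ} (hd : d ^ 2 = V) (hNh : 0 < N * h) (hΦ : N * h < Φ)
    (hmV : m ≤ V / Φ) :
    V - (d * (1 - N * h / Φ)) ^ 2 = V * (N * h / Φ) * (2 - N * h / Φ) ∧
    N * h * (V / Φ) ≤ V - (d * (1 - N * h / Φ)) ^ 2 ∧
    N * m * h ≤ V - (d * (1 - N * h / Φ)) ^ 2 ∧
    0 ≤ V - (d * (1 - N * h / Φ)) ^ 2 := by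
  have hΦ0 : 0 < Φ := hNh.trans hΦ
  have hV : 0 ≤ V := hd ▸ sq_nonneg d
  have ht : N * h / Φ < 1 := (div_lt_one hΦ0).2 hΦ
  have heq : V - (d * (1 - N * h / Φ)) ^ 2 = V * (N * h / Φ) * (2 - N * h / Φ) := by
    rw [← hd]; ring
  have hlow : N * h * (V / Φ) ≤ V * (N * h / Φ) * (2 - N * h / Φ) := by
    have hVt : 0 ≤ V * (N * h / Φ) := mul_nonneg hV (div_pos hNh hΦ0).le
    rw [mul_div_left_comm]
    nlinarith
  have hm : N * m * h ≤ N * h * (V / Φ) := by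
    rw [mul_right_comm]; exact mul_le_mul_of_nonneg_left hmV hNh.le
  rw [heq]
  exact ⟨rfl, hlow, hm.trans hlow, (by positivity : (0:ℝ) ≤ N * h * (V / Φ)).trans hlow⟩

noncomputable def precisedWeight (N h x : ℝ) : ℝ :=
  x - N * h * Real.log (max (x / h) N)

section PrecisedWeight

variable {N h : ℝ}

lemma precisedWeight_of_le (hh : 0 < h) {x : ℝ} (hx : x ≤ N * h) :
    precisedWeight N h x = x - N * h * Real.log N := by
  rw [precisedWeight, max_eq_right ((div_le_iff₀ hh).mpr hx)]

lemma precisedWeight_of_ge (hh : 0 < h) {x : ℝ} (hx : N * h ≤ x) :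
    precisedWeight N h x = x - N * h * Real.log (x / h) := by
  rw [precisedWeight, max_eq_left ((le_div_iff₀ hh).mpr hx)]

lemma lipschitzWith_precisedWeight (hN : 0 < N) (hh : 0 < h) :
    LipschitzWith 2 (precisedWeight N h) := by
  refine LipschitzWith.of_dist_le_mul fun x y => ?_
  have hmax : |max (x / h) N - max (y / h) N| ≤ |x - y| / h := by
    simpa [← sub_div, abs_div, abs_of_pos hh] using abs_max_sub_max_le_abs (x / h) (y / h) N
  have hlog := (abs_log_sub_log_le hN (le_max_right (x / h) N) (le_max_right (y / h) N)).trans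
    (div_le_div_of_nonneg_right hmax hN.le)
  rw [Real.dist_eq, Real.dist_eq, NNReal.coe_ofNat, precisedWeight, precisedWeight]
  calc |x - N * h * Real.log (max (x / h) N) - (y - N * h * Real.log (max (y / h) N))|
      = |(x - y) - N * h * (Real.log (max (x / h) N) - Real.log (max (y / h) N))| := by ring_nf
    _ ≤ |x - y| + N * h * (|x - y| / h / N) := by
      refine (abs_sub _ _).trans (add_le_add_right ?_ _)
      rw [abs_mul, abs_of_pos (by positivity)]
      exact mul_le_mul_of_nonneg_left hlog (by positivity)
    _ = 2 * |x - y| := by field_simp; ring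

lemma hasDerivAt_precisedWeight (hN : 0 ≤ N) (hh : 0 < h) {x : ℝ} (hx : N * h < x) :
    HasDerivAt (precisedWeight N h) (1 - N * h / x) x := by
  have hx0 : x ≠ 0 := (lt_of_le_of_lt (by positivity) hx).ne'
  have hlog := ((hasDerivAt_id' x).div_const h).log (div_ne_zero hx0 hh.ne')
  have hderiv : HasDerivAt (fun y => y - N * h * Real.log (y / h)) (1 - N * h / x) x := by
    refine ((hasDerivAt_id' x).sub (hlog.const_mul (N * h))).congr_deriv ?_
    rw [div_div_div_cancel_right₀ hh.ne', mul_one_div]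
  exact hderiv.congr_of_eventuallyEq
    (eventually_of_mem (Ioi_mem_nhds hx) fun y hy => precisedWeight_of_ge hh hy.le)

lemma deriv_precisedWeight_comp_of_lt (hh : 0 < h) {φ : ℝ → ℝ} {s : ℝ} (hφ : ContinuousAt φ s)
    (hs : φ s < N * h) : deriv (precisedWeight N h ∘ φ) s = deriv φ s := by
  have hloc : precisedWeight N h ∘ φ =ᶠ[𝓝 s] fun t => φ t - N * h * Real.log N :=
    (hφ.eventually (gt_mem_nhds hs)).mono fun t ht => precisedWeight_of_le hh ht.le
  rw [hloc.deriv_eq, deriv_sub_const]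

lemma eikonal_defect_precisedWeight_comp_of_gt (hN : 0 < N) (hh : 0 < h) {φ : ℝ → ℝ}
    {V d m s : ℝ} (hφ : HasDerivAt φ d s) (hd : d ^ 2 = V) (hgt : N * h < φ s)
    (hmV : m ≤ V / φ s) :
    V - deriv (precisedWeight N h ∘ φ) s ^ 2 = V * (N * h / φ s) * (2 - N * h / φ s) ∧
    N * h * (V / φ s) ≤ V - deriv (precisedWeight N h ∘ φ) s ^ 2 ∧
    N * m * h ≤ V - deriv (precisedWeight N h ∘ φ) s ^ 2 ∧
    0 ≤ V - deriv (precisedWeight N h ∘ φ) s ^ 2 := by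
  rw [((hasDerivAt_precisedWeight hN.le hh hgt).comp s hφ).deriv, mul_comm]
  exact eikonal_defect_bounds hd (mul_pos hN hh) hgt hmV

end PrecisedWeight

theorem ae_eikonal_defect_precisedWeight_comp {N h m : ℝ} (hN : 0 < N) (hh : 0 < h)
    {φ V : ℝ → ℝ} {U : Set ℝ} (hU : IsOpen U) (hφc : ∀ s ∈ U, ContinuousAt φ s)
    (hφd : ∀ s ∈ U, φ s ≠ 0 → ∃ d, HasDerivAt φ d s ∧ d ^ 2 = V s)
    (hV : ∀ s ∈ U, φ s ≠ 0 → 0 < V s) (hmV : ∀ s ∈ U, φ s ≠ 0 → m ≤ V s / φ s) :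
    ∀ᵐ s ∂volume.restrict U, s ∈ U ∧
      (φ s < N * h → deriv (precisedWeight N h ∘ φ) s = deriv φ s) ∧
      (N * h ≤ φ s →
        V s - deriv (precisedWeight N h ∘ φ) s ^ 2 = V s * (N * h / φ s) * (2 - N * h / φ s) ∧
        N * h * (V s / φ s) ≤ V s - deriv (precisedWeight N h ∘ φ) s ^ 2 ∧
        N * m * h ≤ V s - deriv (precisedWeight N h ∘ φ) s ^ 2 ∧
        0 ≤ V s - deriv (precisedWeight N h ∘ φ) s ^ 2) := by
  have hNh : 0 < N * h := mul_pos hN hh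
  have hlevel : {s ∈ U | φ s = N * h}.Countable := by
    refine countable_setOf_eq_of_hasDerivAt_ne_zero fun s hs hsN => ?_
    obtain ⟨d, hd, hd2⟩ := hφd s hs (hsN ▸ hNh.ne')
    refine ⟨d, ?_, hd⟩
    rintro rfl
    exact (hV s hs (hsN ▸ hNh.ne')).ne' (by rw [← hd2]; ring)
  filter_upwards [ae_restrict_mem hU.measurableSet, ae_restrict_of_ae (hlevel.ae_notMem volume)]
    with s hsU hsN
  refine ⟨hsU, deriv_precisedWeight_comp_of_lt hh (hφc s hsU), fun hge => ?_⟩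
  have hgt : N * h < φ s := hge.lt_of_ne fun h => hsN ⟨hsU, h.symm⟩
  obtain ⟨d, hd, hd2⟩ := hφd s hsU (hNh.trans hgt).ne'
  exact eikonal_defect_precisedWeight_comp_of_gt hN hh hd hd2 hgt (hmV s hsU (hNh.trans hgt).ne')

theorem stmt_8_general (η : ℝ) (hη : η ∈ Set.Ioo 0 π)
    (B : Set ℝ) (hB : B = Set.Ioo (-(π - η)) (π - η))
    (V : ℝ → ℝ) (hVc : ContinuousOn V (Set.Icc (-(π - η)) (π - η)))
    (hV0 : ∀ s ∈ Set.Icc (-(π - η)) (π - η), 0 ≤ V s)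
    (Φr : ℝ → ℝ) (hΦr : Φr = fun s => |∫ σ in (0:ℝ)..s, Real.sqrt (V σ)|)
    (heik : ∀ᵐ s ∂(volume.restrict B), (deriv Φr s) ^ 2 = V s)
    (c₀ : ℝ) (hc₀ : 0 < c₀)
    (hVlow : ∀ s ∈ B, c₀ * s ^ 2 ≤ V s) (hΦlow : ∀ s ∈ B, c₀ * s ^ 2 ≤ Φr s)
    (m : ℝ) (hminf : ∀ s ∈ B, s ≠ 0 → m ≤ V s / Φr s)
    (N : ℕ) (hN : 1 ≤ N) (h : ℝ) (hh : h ∈ Set.Ioo (0:ℝ) 1)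
    (Φt : ℝ → ℝ)
    (hΦt : Φt = fun s => Φr s - N * h * Real.log (max (Φr s / h) N)) :
    (∃ K : NNReal, LipschitzOnWith K Φt (Set.Icc (-(π - η)) (π - η))) ∧
    (∀ᵐ s ∂(volume.restrict B), Φr s < N * h →
      (deriv Φt s) ^ 2 = (deriv Φr s) ^ 2 ∧ (deriv Φt s) ^ 2 = V s) ∧
    (∀ᵐ s ∂(volume.restrict B), N * h ≤ Φr s →
      V s - (deriv Φt s) ^ 2 = V s * (N * h / Φr s) * (2 - N * h / Φr s) ∧
      N * h * (V s / Φr s) ≤ V s - (deriv Φt s) ^ 2 ∧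
      N * m * h ≤ V s - (deriv Φt s) ^ 2 ∧
      0 ≤ V s - (deriv Φt s) ^ 2) ∧
    ((∀ᵐ s ∂(volume.restrict B), 0 ≤ V s - (deriv Φt s) ^ 2) ∧
     (∀ᵐ s ∂(volume.restrict B), Real.sqrt (N / c₀) * Real.sqrt h ≤ |s| →
       N * m * h ≤ V s - (deriv Φt s) ^ 2)) := by
  subst hB
  obtain rfl : Φt = precisedWeight N h ∘ Φr := hΦt
  have h0 : (0:ℝ) ∈ Icc (-(π - η)) (π - η) := ⟨by linarith [hη.2], by linarith [hη.2]⟩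
  have hN0 : (0:ℝ) < N := by exact_mod_cast hN
  obtain ⟨K, hK⟩ : ∃ K, LipschitzOnWith K Φr (Icc (-(π - η)) (π - η)) := by
    obtain ⟨K, hK⟩ := lipschitzOnWith_primitive hVc.sqrt h0
    exact ⟨1 * K, hΦr ▸ lipschitzWith_one_norm.comp_lipschitzOnWith hK⟩
  have hne0 : ∀ s, Φr s ≠ 0 → s ≠ 0 := by
    rintro s hs rfl
    simp [hΦr] at hs
  have hΦd : ∀ s ∈ Ioo (-(π - η)) (π - η), Φr s ≠ 0 → ∃ d, HasDerivAt Φr d s ∧ d ^ 2 = V s := by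
    subst hΦr
    exact fun s hs hne =>
      exists_hasDerivAt_abs_primitive_sqrt hVc hV0 h0 hs (abs_ne_zero.mp hne)
  have hdefect := ae_eikonal_defect_precisedWeight_comp hN0 hh.1 isOpen_Ioo
    (fun s hs => hK.continuousOn.continuousAt (Icc_mem_nhds hs.1 hs.2)) hΦd
    (fun s hs hne => have := hne0 s hne; (by positivity : 0 < c₀ * s ^ 2).trans_le (hVlow s hs))
    (fun s hs hne => hminf s hs (hne0 s hne))
  refine ⟨⟨2 * K, (lipschitzWith_precisedWeight hN0 hh.1).comp_lipschitzOnWith hK⟩,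
    ?_, ?_, ?_, ?_⟩ <;> filter_upwards [hdefect, heik] with s ⟨hsB, hbelow, habove⟩ hsV
  · exact fun hlt => by rw [hbelow hlt]; exact ⟨rfl, hsV⟩
  · exact habove
  · rcases lt_or_ge (Φr s) (N * h) with hlt | hge
    · rw [hbelow hlt, hsV, sub_self]
    · exact (habove hge).2.2.2
  · exact fun hR => (habove ((le_mul_sq_of_sqrt_div_mul_sqrt_le_abs hc₀ hN0.le hh.1.le hR).trans
      (hΦlow s hsB))).2.2.1

/-- Proposition 2.4 (b): the precised weight `Φ̃_{N,h} = Φ_r − Nh ln(max(Φ_r/h, N))`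
is Lipschitz and satisfies: (i) on `{Φ_r < Nh}`, `(Φ̃')² = (Φ_r')² = V` a.e.;
(ii) on `{Φ_r ≥ Nh}`, a.e. `V − (Φ̃')² = V (Nh/Φ_r)(2 − Nh/Φ_r) ≥ Nh V/Φ_r ≥ Nmh ≥ 0`;
(iii) with `R = √(N/c₀)`, `V − (Φ̃')² ≥ 0` a.e. on `B` and `≥ Nmh` a.e. on `{|s| ≥ R√h}`. -/
theorem stmt_8 (η : ℝ) (hη : η ∈ Set.Ioo 0 π)
    (B : Set ℝ) (hB : B = Set.Ioo (-(π - η)) (π - η))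
    (V : ℝ → ℝ) (hVc : ContinuousOn V (Set.Icc (-(π - η)) (π - η)))
    (hV0 : ∀ s ∈ Set.Icc (-(π - η)) (π - η), 0 ≤ V s)
    (Φr : ℝ → ℝ) (hΦr : Φr = fun s => |∫ σ in (0:ℝ)..s, Real.sqrt (V σ)|)
    (heik : ∀ᵐ s ∂(volume.restrict B), (deriv Φr s) ^ 2 = V s)
    (c₀ : ℝ) (hc₀ : 0 < c₀)
    (hVlow : ∀ s ∈ B, c₀ * s ^ 2 ≤ V s) (hΦlow : ∀ s ∈ B, c₀ * s ^ 2 ≤ Φr s)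
    (m : ℝ) (hm : 0 < m) (hminf : ∀ s ∈ B, s ≠ 0 → m ≤ V s / Φr s)
    (N : ℕ) (hN : 1 ≤ N) (h : ℝ) (hh : h ∈ Set.Ioo (0:ℝ) 1)
    (Φt : ℝ → ℝ)
    (hΦt : Φt = fun s => Φr s - N * h * Real.log (max (Φr s / h) N)) :
    (∃ K : NNReal, LipschitzOnWith K Φt (Set.Icc (-(π - η)) (π - η))) ∧
    (∀ᵐ s ∂(volume.restrict B), Φr s < N * h →
      (deriv Φt s) ^ 2 = (deriv Φr s) ^ 2 ∧ (deriv Φt s) ^ 2 = V s) ∧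
    (∀ᵐ s ∂(volume.restrict B), N * h ≤ Φr s →
      V s - (deriv Φt s) ^ 2 = V s * (N * h / Φr s) * (2 - N * h / Φr s) ∧
      N * h * (V s / Φr s) ≤ V s - (deriv Φt s) ^ 2 ∧
      N * m * h ≤ V s - (deriv Φt s) ^ 2 ∧
      0 ≤ V s - (deriv Φt s) ^ 2) ∧
    ((∀ᵐ s ∂(volume.restrict B), 0 ≤ V s - (deriv Φt s) ^ 2) ∧
     (∀ᵐ s ∂(volume.restrict B), Real.sqrt (N / c₀) * Real.sqrt h ≤ |s| →
       N * m * h ≤ V s - (deriv Φt s) ^ 2)) :=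
  stmt_8_general η hη B hB V hVc hV0 Φr hΦr heik c₀ hc₀ hVlow hΦlow m hminf N hN h hh Φt hΦt
end

section
/- For every ε ∈ (0, 1), N ∈ ℕ* and h ∈ (0, 1), the weight Φ̂_{N,h}(s) = min{ Φ̃_{N,h}(s), √(1−ε) · inf_{t ∈ supp χ'} (Φ_r(t) + |∫_s^t √(V(σ)) dσ|) } is Lipschitz on [−(π−η), π−η], and almost everywhere on B one has either (Φ̂_{N,h}'(s))² ≤ (1−ε) V(s) or |Φ̂_{N,h}'(s)| = |Φ̃_{N,h}'(s)|; consequently V − (Φ̂_{N,h}')² ≥ 0 almost everywhere on B, and, with R = √(N/c₀) and M = N min(ε, m), V − (Φ̂_{N,h}')² ≥ M h almost everywhere on {s ∈ B : |s| ≥ R h^{1/2}}. (Proposition 2.4 (c), intermediate weight.) -/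
open MeasureTheory Real Filter Topology

lemma aux_master (u G v : ℝ → ℝ) (s c d : ℝ) (hc : 0 ≤ c)
    (hle : ∀ᶠ x in 𝓝 s, u x ≤ G x) (heq : u s = G s)
    (hG : ∀ᶠ x in 𝓝 s, |G x - G s| ≤ c * |v x - v s|)
    (hv : HasDerivAt v d s) : |deriv u s| ≤ c * |d| := by
  by_cases hu : DifferentiableAt ℝ u s
  · have hu' := hu.hasDerivAt
    have hslope_u := hasDerivAt_iff_tendsto_slope.1 hu'
    have hslope_v := hasDerivAt_iff_tendsto_slope.1 hv
    have hub : Tendsto (fun x => c * |slope v s x|) (𝓝[≠] s) (𝓝 (c * |d|)) :=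
      (hslope_v.abs).const_mul c
    have hkey : ∀ᶠ x in 𝓝[≠] s, u x - u s ≤ c * |v x - v s| := by
      filter_upwards [nhdsWithin_le_nhds hle, nhdsWithin_le_nhds hG] with x h1 h2
      calc u x - u s ≤ G x - G s := by rw [heq]; linarith
        _ ≤ |G x - G s| := le_abs_self _
        _ ≤ c * |v x - v s| := h2
    rw [abs_le]
    constructor
    · have h1 : Tendsto (slope u s) (𝓝[<] s) (𝓝 (deriv u s)) :=
        hslope_u.mono_left (nhdsWithin_mono _ (fun x hx => ne_of_lt hx))
      have h2 : Tendsto (fun x => -(c * |slope v s x|)) (𝓝[<] s) (𝓝 (-(c*|d|))) :=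
        (hub.mono_left (nhdsWithin_mono _ (fun x hx => ne_of_lt hx))).neg
      refine le_of_tendsto_of_tendsto h2 h1 ?_
      have hk : ∀ᶠ x in 𝓝[<] s, u x - u s ≤ c * |v x - v s| :=
        (hkey.filter_mono (nhdsWithin_mono _ (fun x hx => ne_of_lt hx)))
      filter_upwards [hk, self_mem_nhdsWithin] with x hx hxs
      have ht : (0:ℝ) < s - x := by simp only [Set.mem_Iio] at hxs; linarith
      have e1 : slope u s x = (u s - u x) / (s - x) := by
        rw [slope_def_field, show u x - u s = -(u s - u x) by ring,
          show x - s = -(s - x) by ring, neg_div_neg_eq]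
      have e2 : |slope v s x| = |v x - v s| / (s - x) := by
        rw [slope_def_field, abs_div, abs_of_neg (show x - s < 0 by linarith)]
        ring_nf
      rw [e1, e2]
      calc -(c * (|v x - v s| / (s - x))) = (-(c * |v x - v s|)) / (s - x) := by ring
        _ ≤ (u s - u x) / (s - x) :=
          div_le_div_of_nonneg_right (by linarith) ht.le |>.trans_eq rfl
    · have h1 : Tendsto (slope u s) (𝓝[>] s) (𝓝 (deriv u s)) :=
        hslope_u.mono_left (nhdsWithin_mono _ (fun x hx => ne_of_gt hx))
      have h2 : Tendsto (fun x => c * |slope v s x|) (𝓝[>] s) (𝓝 (c*|d|)) :=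
        hub.mono_left (nhdsWithin_mono _ (fun x hx => ne_of_gt hx))
      refine le_of_tendsto_of_tendsto h1 h2 ?_
      have hk : ∀ᶠ x in 𝓝[>] s, u x - u s ≤ c * |v x - v s| :=
        (hkey.filter_mono (nhdsWithin_mono _ (fun x hx => ne_of_gt hx)))
      filter_upwards [hk, self_mem_nhdsWithin] with x hx hxs
      have ht : (0:ℝ) < x - s := by simp only [Set.mem_Ioi] at hxs; linarith
      have e2 : |slope v s x| = |v x - v s| / (x - s) := by
        rw [slope_def_field, abs_div, abs_of_pos ht]
      rw [slope_def_field, e2]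
      calc (u x - u s) / (x - s) ≤ (c * |v x - v s|) / (x - s) :=
            div_le_div_of_nonneg_right hx ht.le
        _ = c * (|v x - v s| / (x - s)) := by ring
  · rw [deriv_zero_of_not_differentiableAt hu]
    simp [abs_nonneg, mul_nonneg hc (abs_nonneg _)]

lemma aux_F_mono (n h : ℝ) (hn : 1 ≤ n) (hh : 0 < h) {a b : ℝ} (hab : a ≤ b) :
    0 ≤ Real.log (max (b/h) n) - Real.log (max (a/h) n) ∧
    n*h*(Real.log (max (b/h) n) - Real.log (max (a/h) n)) ≤ b - a := by
  set A := max (a/h) n with hA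
  set Bb := max (b/h) n with hBb
  have hnA : n ≤ A := le_max_right _ _
  have hnB : n ≤ Bb := le_max_right _ _
  have h0A : (0:ℝ) < A := lt_of_lt_of_le (by linarith) hnA
  have h0B : (0:ℝ) < Bb := lt_of_lt_of_le (by linarith) hnB
  have hAB : A ≤ Bb := max_le_max (div_le_div_of_nonneg_right hab hh.le) le_rfl
  have hBA : Bb ≤ A + (b - a)/h := by
    have ht : 0 ≤ (b-a)/h := div_nonneg (by linarith) hh.le
    have hbb : b/h = a/h + (b-a)/h := by field_simp; ring
    rw [hBb, hbb]
    exact max_le (add_le_add (le_max_left _ _) le_rfl)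
      (le_trans hnA (by linarith))
  refine ⟨sub_nonneg.2 (Real.log_le_log h0A hAB), ?_⟩
  have hlog : Real.log Bb - Real.log A ≤ (Bb - A)/A := by
    rw [← Real.log_div h0B.ne' h0A.ne']
    calc Real.log (Bb/A) ≤ Bb/A - 1 := Real.log_le_sub_one_of_pos (div_pos h0B h0A)
      _ = (Bb - A)/A := by field_simp
  have h2 : (Bb - A)/A ≤ (Bb - A)/n :=
    div_le_div_of_nonneg_left (sub_nonneg.2 hAB) (by linarith) hnA
  calc n*h*(Real.log Bb - Real.log A) ≤ n*h*((Bb-A)/n) := by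
        apply mul_le_mul_of_nonneg_left (hlog.trans h2) (by positivity)
    _ = h*(Bb - A) := by field_simp
    _ ≤ h*((b-a)/h) := mul_le_mul_of_nonneg_left (by linarith) hh.le
    _ = b - a := by field_simp

lemma aux_F_lip (n h : ℝ) (hn : 1 ≤ n) (hh : 0 < h) (a b : ℝ) :
    |(b - n*h*Real.log (max (b/h) n)) - (a - n*h*Real.log (max (a/h) n))| ≤ |b - a| := by
  have hn0 : 0 ≤ n*h := by positivity
  rcases le_total a b with hab | hab
  · obtain ⟨h1, h2⟩ := aux_F_mono n h hn hh hab
    rw [abs_of_nonneg (by linarith), abs_of_nonneg (by nlinarith [mul_nonneg hn0 h1])]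
    nlinarith [mul_nonneg hn0 h1]
  · obtain ⟨h1, h2⟩ := aux_F_mono n h hn hh hab
    rw [abs_of_nonpos (by linarith), abs_of_nonpos (by nlinarith [mul_nonneg hn0 h1])]
    nlinarith [mul_nonneg hn0 h1]

set_option maxHeartbeats 1000000 in
/-- Proposition 2.4 (c): the intermediate weight
`Φ̂_{N,h}(s) = min(Φ̃_{N,h}(s), √(1−ε) inf_{t ∈ supp χ'} (Φ_r(t) + |∫ₛᵗ √V|))`
is Lipschitz and, a.e. on `B`, either `(Φ̂')² ≤ (1−ε)V` or `|Φ̂'| = |Φ̃'|`; consequently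
`V − (Φ̂')² ≥ 0` a.e. on `B` and `V − (Φ̂')² ≥ Mh` a.e. on `{|s| ≥ R√h}`, with
`R = √(N/c₀)` and `M = N min(ε, m)`. -/
theorem stmt_9 (η : ℝ) (hη : η ∈ Set.Ioo 0 (π / 2))
    (B : Set ℝ) (hB : B = Set.Ioo (-(π - η)) (π - η))
    (V : ℝ → ℝ) (hVc : ContinuousOn V (Set.Icc (-(π - η)) (π - η)))
    (hV0 : ∀ s ∈ Set.Icc (-(π - η)) (π - η), 0 ≤ V s)
    (Φr : ℝ → ℝ) (hΦr : Φr = fun s => |∫ σ in (0:ℝ)..s, Real.sqrt (V σ)|)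
    (heik : ∀ᵐ s ∂(volume.restrict B), (deriv Φr s) ^ 2 = V s)
    (c₀ : ℝ) (hc₀ : 0 < c₀)
    (hVlow : ∀ s ∈ B, c₀ * s ^ 2 ≤ V s) (hΦlow : ∀ s ∈ B, c₀ * s ^ 2 ≤ Φr s)
    (m : ℝ) (hm : 0 < m) (hminf : ∀ s ∈ B, s ≠ 0 → m ≤ V s / Φr s)
    (χ : ℝ → ℝ) (hχ : ContDiff ℝ (⊤ : ℕ∞) χ) (hχsupp : tsupport χ ⊆ B)
    (hχ01 : ∀ s, χ s ∈ Set.Icc (0:ℝ) 1)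
    (hχ1 : ∀ s ∈ Set.Ioo (-(π - 2 * η)) (π - 2 * η), χ s = 1)
    (ε : ℝ) (hε : ε ∈ Set.Ioo (0:ℝ) 1)
    (N : ℕ) (hN : 1 ≤ N) (h : ℝ) (hh : h ∈ Set.Ioo (0:ℝ) 1)
    (Φt : ℝ → ℝ)
    (hΦt : Φt = fun s => Φr s - N * h * Real.log (max (Φr s / h) N))
    (Φh : ℝ → ℝ)
    (hΦh : Φh = fun s => min (Φt s) (Real.sqrt (1 - ε) *
      sInf ((fun t => Φr t + |∫ σ in s..t, Real.sqrt (V σ)|) '' tsupport (deriv χ)))) :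
    (∃ K : NNReal, LipschitzOnWith K Φh (Set.Icc (-(π - η)) (π - η))) ∧
    (∀ᵐ s ∂(volume.restrict B),
      (deriv Φh s) ^ 2 ≤ (1 - ε) * V s ∨ |deriv Φh s| = |deriv Φt s|) ∧
    (∀ᵐ s ∂(volume.restrict B), 0 ≤ V s - (deriv Φh s) ^ 2) ∧
    (∀ᵐ s ∂(volume.restrict B), Real.sqrt (N / c₀) * Real.sqrt h ≤ |s| →
      N * min ε m * h ≤ V s - (deriv Φh s) ^ 2) := by
  obtain ⟨hη0, hη2⟩ := hη
  obtain ⟨hε0, hε1⟩ := hε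
  obtain ⟨hh0, hh1⟩ := hh
  have hπ : 0 < π := Real.pi_pos
  have hπη : 0 < π - η := by linarith
  have hπ2η : 0 < π - 2*η := by linarith
  set I := Set.Icc (-(π - η)) (π - η) with hI
  have hBI : B ⊆ I := by rw [hB, hI]; exact Set.Ioo_subset_Icc_self
  have h0B : (0:ℝ) ∈ B := by rw [hB]; exact ⟨by linarith, by linarith⟩
  have h0I : (0:ℝ) ∈ I := hBI h0B
  have hBopen : IsOpen B := by rw [hB]; exact isOpen_Ioo
  have hBmeas : MeasurableSet B := hBopen.measurableSet
  have hInhds : ∀ s ∈ B, I ∈ 𝓝 s := fun s hs => Filter.mem_of_superset (hBopen.mem_nhds hs) hBI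
  set W : ℝ → ℝ := fun s => ∫ σ in (0:ℝ)..s, Real.sqrt (V σ) with hWdef
  have hΦrW : ∀ s, Φr s = |W s| := fun s => by rw [hΦr, hWdef]
  have hΦr0 : ∀ s, 0 ≤ Φr s := fun s => (hΦrW s) ▸ abs_nonneg _
  have hsqVc : ContinuousOn (fun σ => Real.sqrt (V σ)) I :=
    Real.continuous_sqrt.comp_continuousOn hVc
  have hsq0 : ∀ σ : ℝ, 0 ≤ Real.sqrt (V σ) := fun σ => Real.sqrt_nonneg _
  have hInt : ∀ a ∈ I, ∀ b ∈ I, IntervalIntegrable (fun σ => Real.sqrt (V σ)) volume a b :=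
    fun a ha b hb => (hsqVc.mono (Set.uIcc_subset_Icc ha hb)).intervalIntegrable
  have hWsub : ∀ a ∈ I, ∀ b ∈ I, (∫ σ in a..b, Real.sqrt (V σ)) = W b - W a := by
    intro a ha b hb
    have := intervalIntegral.integral_interval_sub_left (hInt 0 h0I b hb) (hInt 0 h0I a ha)
    rw [← this]
  obtain ⟨C, hC⟩ := (isCompact_Icc : IsCompact I).exists_bound_of_continuousOn hsqVc
  set L := max C 0 with hLdef
  have hL0 : 0 ≤ L := le_max_right _ _
  have hCL : ∀ σ ∈ I, Real.sqrt (V σ) ≤ L := by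
    intro σ hσ
    calc Real.sqrt (V σ) ≤ |Real.sqrt (V σ)| := le_abs_self _
      _ ≤ C := by simpa using hC σ hσ
      _ ≤ L := le_max_left _ _
  have hWlip : ∀ a ∈ I, ∀ b ∈ I, |W b - W a| ≤ L * |b - a| := by
    intro a ha b hb
    rw [← hWsub a ha b hb]
    have hbnd : ∀ x ∈ Set.uIoc a b, ‖Real.sqrt (V x)‖ ≤ L := by
      intro x hx
      have hxI : x ∈ I := Set.uIcc_subset_Icc ha hb (Set.uIoc_subset_uIcc hx)
      rw [Real.norm_eq_abs, abs_of_nonneg (hsq0 x)]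
      exact hCL x hxI
    simpa [Real.norm_eq_abs] using
      intervalIntegral.norm_integral_le_of_norm_le_const hbnd
  set T := tsupport (deriv χ) with hTdef
  have hTB : T ⊆ B := (closure_minimal support_deriv_subset (isClosed_tsupport χ)).trans hχsupp
  have hTne : T.Nonempty := by
    by_contra hemp
    rw [Set.not_nonempty_iff_eq_empty] at hemp
    have hder0 : ∀ x, deriv χ x = 0 := by
      intro x
      apply image_eq_zero_of_notMem_tsupport
      rw [← hTdef, hemp]
      exact Set.notMem_empty x
    have hconst := is_const_of_deriv_eq_zero (hχ.differentiable (by simp)) hder0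
    have h1 : χ 0 = 1 := hχ1 0 ⟨by linarith, by linarith⟩
    have h2 : χ (π - η) = 0 := by
      apply image_eq_zero_of_notMem_tsupport
      intro hmem
      have := hχsupp hmem
      rw [hB] at this
      exact absurd this.2 (lt_irrefl _)
    rw [hconst 0 (π-η), h2] at h1
    exact zero_ne_one h1
  set g : ℝ → ℝ := fun s => Real.sqrt (1-ε) *
    sInf ((fun t => Φr t + |∫ σ in s..t, Real.sqrt (V σ)|) '' T) with hgdef
  have hΦhg : ∀ s, Φh s = min (Φt s) (g s) := by
    intro s; rw [hΦh, hgdef]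
  have hsqe : Real.sqrt (1-ε) ≤ 1 := by
    rw [show Real.sqrt (1-ε) ≤ 1 ↔ Real.sqrt (1-ε) ≤ Real.sqrt 1 by rw [Real.sqrt_one]]
    exact Real.sqrt_le_sqrt (by linarith)
  have hsqe0 : 0 ≤ Real.sqrt (1-ε) := Real.sqrt_nonneg _
  have hSne : ∀ s : ℝ, ((fun t => Φr t + |∫ σ in s..t, Real.sqrt (V σ)|) '' T).Nonempty :=
    fun s => hTne.image _
  have hSbd : ∀ s : ℝ, BddBelow ((fun t => Φr t + |∫ σ in s..t, Real.sqrt (V σ)|) '' T) := by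
    intro s
    refine ⟨0, ?_⟩
    rintro y ⟨t, ht, rfl⟩
    exact add_nonneg (hΦr0 t) (abs_nonneg _)
  have hgdiff : ∀ a ∈ I, ∀ b ∈ I, g b ≤ g a + Real.sqrt (1-ε) * |W b - W a| := by
    intro a ha b hb
    have step : ∀ y ∈ (fun t => Φr t + |∫ σ in a..t, Real.sqrt (V σ)|) '' T,
        sInf ((fun t => Φr t + |∫ σ in b..t, Real.sqrt (V σ)|) '' T) ≤ y + |W b - W a| := by
      rintro y ⟨t, htT, rfl⟩
      have htI : t ∈ I := hBI (hTB htT)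
      have e1 : (∫ σ in a..t, Real.sqrt (V σ)) = W t - W a := hWsub a ha t htI
      have e2 : (∫ σ in b..t, Real.sqrt (V σ)) = W t - W b := hWsub b hb t htI
      have mem : Φr t + |∫ σ in b..t, Real.sqrt (V σ)|
          ∈ (fun t => Φr t + |∫ σ in b..t, Real.sqrt (V σ)|) '' T := ⟨t, htT, rfl⟩
      have htri : |W t - W b| ≤ |W t - W a| + |W b - W a| := by
        calc |W t - W b| = |(W t - W a) + (W a - W b)| := by ring_nf
          _ ≤ |W t - W a| + |W a - W b| := abs_add_le _ _
          _ = |W t - W a| + |W b - W a| := by rw [abs_sub_comm (W a) (W b)]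
      calc sInf ((fun t => Φr t + |∫ σ in b..t, Real.sqrt (V σ)|) '' T)
          ≤ Φr t + |∫ σ in b..t, Real.sqrt (V σ)| := csInf_le (hSbd b) mem
        _ = Φr t + |W t - W b| := by rw [e2]
        _ ≤ (Φr t + |W t - W a|) + |W b - W a| := by linarith
        _ = (Φr t + |∫ σ in a..t, Real.sqrt (V σ)|) + |W b - W a| := by rw [e1]
    have key : sInf ((fun t => Φr t + |∫ σ in b..t, Real.sqrt (V σ)|) '' T)
        ≤ sInf ((fun t => Φr t + |∫ σ in a..t, Real.sqrt (V σ)|) '' T) + |W b - W a| := by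
      have hlb : sInf ((fun t => Φr t + |∫ σ in b..t, Real.sqrt (V σ)|) '' T) - |W b - W a|
          ≤ sInf ((fun t => Φr t + |∫ σ in a..t, Real.sqrt (V σ)|) '' T) :=
        le_csInf (hSne a) (fun y hy => by linarith [step y hy])
      linarith
    calc g b = Real.sqrt (1-ε) * sInf ((fun t => Φr t + |∫ σ in b..t, Real.sqrt (V σ)|) '' T) :=
          by rw [hgdef]
      _ ≤ Real.sqrt (1-ε) * (sInf ((fun t => Φr t + |∫ σ in a..t, Real.sqrt (V σ)|) '' T)
            + |W b - W a|) := mul_le_mul_of_nonneg_left key hsqe0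
      _ = g a + Real.sqrt (1-ε) * |W b - W a| := by rw [hgdef]; ring
  have hglip : ∀ a ∈ I, ∀ b ∈ I, |g b - g a| ≤ Real.sqrt (1-ε) * |W b - W a| := by
    intro a ha b hb
    rw [abs_le]
    constructor
    · have := hgdiff b hb a ha
      rw [abs_sub_comm (W a) (W b)] at this
      linarith
    · linarith [hgdiff a ha b hb]
  have hΦr_lip : ∀ a b : ℝ, |Φr b - Φr a| ≤ |W b - W a| := by
    intro a b
    rw [hΦrW, hΦrW]
    exact abs_abs_sub_abs_le_abs_sub _ _
  have hN1 : (1:ℝ) ≤ (N:ℝ) := by exact_mod_cast hN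
  have hΦtp : ∀ s, Φt s = Φr s - (N:ℝ)*h*Real.log (max (Φr s/h) (N:ℝ)) := by
    intro s; rw [hΦt]
  have hΦt_lip : ∀ a b : ℝ, |Φt b - Φt a| ≤ |W b - W a| := by
    intro a b
    rw [hΦtp, hΦtp]
    exact (aux_F_lip (N:ℝ) h hN1 hh0 (Φr a) (Φr b)).trans (hΦr_lip a b)
  have hWd : ∀ s ∈ B, HasDerivAt W (Real.sqrt (V s)) s := by
    intro s hs
    have hmeas : StronglyMeasurableAtFilter (fun σ => Real.sqrt (V σ)) (𝓝 s) volume :=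
      ContinuousOn.stronglyMeasurableAtFilter hBopen (hsqVc.mono hBI) s hs
    have hcont : ContinuousAt (fun σ => Real.sqrt (V σ)) s :=
      hsqVc.continuousAt (hInhds s hs)
    exact intervalIntegral.integral_hasDerivAt_right (hInt 0 h0I s (hBI hs)) hmeas hcont
  have hΦrpos : ∀ s ∈ B, s ≠ 0 → 0 < Φr s := by
    intro s hs hs0
    exact lt_of_lt_of_le (by positivity) (hΦlow s hs)
  have hΦrd : ∀ s ∈ B, s ≠ 0 → ∃ d, HasDerivAt Φr d s ∧ d^2 = V s := by
    intro s hs hs0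
    have hVs0 := hV0 s (hBI hs)
    have hWne : W s ≠ 0 := by
      intro hws
      have := hΦrpos s hs hs0
      rw [hΦrW s, hws, abs_zero] at this
      exact lt_irrefl _ this
    have hWc : ContinuousAt W s := (hWd s hs).continuousAt
    rcases hWne.lt_or_gt with hneg | hpos
    · refine ⟨-(Real.sqrt (V s)), ?_, by rw [neg_pow, Real.sq_sqrt hVs0]; ring⟩
      have hev : Φr =ᶠ[𝓝 s] (fun x => -(W x)) := by
        filter_upwards [hWc.eventually_lt continuousAt_const hneg] with x hx
        rw [hΦrW x, abs_of_neg hx]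
      exact ((hWd s hs).neg).congr_of_eventuallyEq hev
    · refine ⟨Real.sqrt (V s), ?_, Real.sq_sqrt hVs0⟩
      have hev : Φr =ᶠ[𝓝 s] W := by
        filter_upwards [continuousAt_const.eventually_lt hWc hpos] with x hx
        rw [hΦrW x, abs_of_pos hx]
      exact (hWd s hs).congr_of_eventuallyEq hev
  have hgle : ∀ s ∈ B, g s ≤ Φt s → (deriv Φh s)^2 ≤ (1-ε) * V s := by
    intro s hs hgs
    have hVs := hV0 s (hBI hs)
    have hmast := aux_master Φh g W s (Real.sqrt (1-ε)) (Real.sqrt (V s)) hsqe0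
      (Filter.Eventually.of_forall (fun x => by rw [hΦhg]; exact min_le_right _ _))
      (by rw [hΦhg]; exact min_eq_right hgs)
      (by filter_upwards [hInhds s hs] with x hx; exact hglip s (hBI hs) x hx)
      (hWd s hs)
    rw [abs_of_nonneg (Real.sqrt_nonneg _)] at hmast
    calc (deriv Φh s)^2 = |deriv Φh s|^2 := (sq_abs _).symm
      _ ≤ (Real.sqrt (1-ε) * Real.sqrt (V s))^2 := pow_le_pow_left₀ (abs_nonneg _) hmast 2
      _ = (1-ε) * V s := by rw [mul_pow, Real.sq_sqrt (by linarith), Real.sq_sqrt hVs]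
  have hΦtbd : ∀ s ∈ B, |deriv Φt s| ≤ Real.sqrt (V s) := by
    intro s hs
    have hmast := aux_master Φt Φt W s 1 (Real.sqrt (V s)) zero_le_one
      (Filter.Eventually.of_forall fun _ => le_rfl) rfl
      (Filter.Eventually.of_forall fun x => by rw [one_mul]; exact hΦt_lip s x)
      (hWd s hs)
    simpa [abs_of_nonneg (Real.sqrt_nonneg _)] using hmast
  have hΦtcont : ∀ s ∈ B, ContinuousAt Φt s := by
    intro s hs
    have hWc : ContinuousAt W s := (hWd s hs).continuousAt
    rw [ContinuousAt, tendsto_iff_dist_tendsto_zero]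
    apply squeeze_zero (g := fun x => |W x - W s|) (fun x => dist_nonneg)
      (fun x => by rw [Real.dist_eq]; exact hΦt_lip s x)
    have := tendsto_iff_dist_tendsto_zero.1 hWc.tendsto
    simpa [Real.dist_eq] using this
  have hgcont : ∀ s ∈ B, ContinuousAt g s := by
    intro s hs
    have hWc : ContinuousAt W s := (hWd s hs).continuousAt
    rw [ContinuousAt, tendsto_iff_dist_tendsto_zero]
    apply squeeze_zero' (Filter.Eventually.of_forall (fun x => dist_nonneg))
      (g := fun x => Real.sqrt (1-ε) * |W x - W s|)
      (by filter_upwards [hInhds s hs] with x hx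
          rw [Real.dist_eq]
          exact hglip s (hBI hs) x hx)
    have h0 : Tendsto (fun x => |W x - W s|) (𝓝 s) (𝓝 0) := by
      have := tendsto_iff_dist_tendsto_zero.1 hWc.tendsto
      simpa [Real.dist_eq] using this
    simpa using h0.const_mul (Real.sqrt (1-ε))
  have hminΦt : ∀ s ∈ B, Φt s < g s → deriv Φh s = deriv Φt s := by
    intro s hs hlt
    have hev : Φh =ᶠ[𝓝 s] Φt := by
      filter_upwards [(hΦtcont s hs).eventually_lt (hgcont s hs) hlt] with x hx
      rw [hΦhg]
      exact min_eq_left hx.le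
    exact hev.deriv_eq
  refine ⟨?_, ?_, ?_, ?_⟩
  · -- Lipschitz
    refine ⟨L.toNNReal, ?_⟩
    rw [lipschitzOnWith_iff_dist_le_mul, Real.coe_toNNReal _ hL0]
    intro x hx y hy
    rw [Real.dist_eq, Real.dist_eq, hΦhg, hΦhg]
    calc |min (Φt x) (g x) - min (Φt y) (g y)|
        ≤ max |Φt x - Φt y| |g x - g y| := abs_min_sub_min_le_max _ _ _ _
      _ ≤ |W x - W y| := by
          apply max_le (hΦt_lip y x)
          calc |g x - g y| ≤ Real.sqrt (1-ε) * |W x - W y| := hglip y hy x hx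
            _ ≤ 1 * |W x - W y| := mul_le_mul_of_nonneg_right hsqe (abs_nonneg _)
            _ = |W x - W y| := one_mul _
      _ ≤ L * |x - y| := hWlip y hy x hx
  · -- either (Φh')² ≤ (1−ε)V or |Φh'| = |Φt'|
    apply ae_restrict_of_forall_mem hBmeas
    intro s hs
    rcases lt_or_ge (Φt s) (g s) with hlt | hle
    · right; rw [hminΦt s hs hlt]
    · left; exact hgle s hs hle
  · -- V − (Φh')² ≥ 0
    apply ae_restrict_of_forall_mem hBmeas
    intro s hs
    have hVs := hV0 s (hBI hs)
    rcases lt_or_ge (Φt s) (g s) with hlt | hle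
    · rw [sub_nonneg, hminΦt s hs hlt]
      calc (deriv Φt s)^2 = |deriv Φt s|^2 := (sq_abs _).symm
        _ ≤ (Real.sqrt (V s))^2 := pow_le_pow_left₀ (abs_nonneg _) (hΦtbd s hs) 2
        _ = V s := Real.sq_sqrt hVs
    · have := hgle s hs hle
      nlinarith [mul_nonneg hε0.le hVs]
  · -- quantitative bound
    have hNh0 : (0:ℝ) < (N:ℝ)*h := by positivity
    have hWlt : ∀ a ∈ B, ∀ b ∈ B, a < b → W a < W b := by
      intro a ha b hb hab
      have hmem : ∀ u ∈ B, ∀ v ∈ B, ∀ x, u < x → x < v → x ∈ B := by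
        intro u hu v hv x h1 h2
        rw [hB] at hu hv ⊢
        exact ⟨lt_trans hu.1 h1, lt_trans h2 hv.2⟩
      have hint : ∀ u, u ∈ B → ∀ v, v ∈ B → u < v → (∀ σ ∈ Set.Ioo u v, σ ≠ 0) →
          W u < W v := by
        intro u hu v hv huv hne
        have hpos : 0 < ∫ σ in u..v, Real.sqrt (V σ) := by
          apply intervalIntegral.intervalIntegral_pos_of_pos_on
            (hInt u (hBI hu) v (hBI hv)) ?_ huv
          intro x hx
          have hxB : x ∈ B := hmem u hu v hv x hx.1 hx.2
          have hx0 : x ≠ 0 := hne x hx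
          have : 0 < c₀ * x^2 := by positivity
          exact Real.sqrt_pos.2 (lt_of_lt_of_le this (hVlow x hxB))
        have heq := hWsub u (hBI hu) v (hBI hv)
        linarith [heq ▸ hpos]
      rcases le_or_gt 0 a with h0a | ha0
      · exact hint a ha b hb hab (fun σ hσ => ne_of_gt (lt_of_le_of_lt h0a hσ.1))
      · rcases le_or_gt b 0 with hb0 | h0b
        · exact hint a ha b hb hab (fun σ hσ => ne_of_lt (lt_of_lt_of_le hσ.2 hb0))
        · have h1 : W a ≤ W 0 := by
            have h2 := hWsub a (hBI ha) 0 h0I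
            have h3 : 0 ≤ ∫ σ in a..0, Real.sqrt (V σ) :=
              intervalIntegral.integral_nonneg ha0.le (fun u _ => hsq0 u)
            linarith [h2 ▸ h3]
          have h2 : W 0 < W b := hint 0 h0B b hb h0b (fun σ hσ => ne_of_gt hσ.1)
          linarith
    have hfib : ∀ c : ℝ, Set.Subsingleton {s : ℝ | s ∈ B ∧ W s = c} := by
      intro c x hx y hy
      by_contra hne
      rcases Ne.lt_or_gt hne with hl | hl
      · exact absurd (hx.2.trans hy.2.symm) (ne_of_lt (hWlt x hx.1 y hy.1 hl))
      · exact absurd (hy.2.trans hx.2.symm) (ne_of_lt (hWlt y hy.1 x hx.1 hl))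
    have hcnt : Set.Countable {s : ℝ | s = 0 ∨ (s ∈ B ∧ |W s| = (N:ℝ)*h)} := by
      have hsub : {s : ℝ | s = 0 ∨ (s ∈ B ∧ |W s| = (N:ℝ)*h)} ⊆
          {(0:ℝ)} ∪ ({s : ℝ | s ∈ B ∧ W s = (N:ℝ)*h}
            ∪ {s : ℝ | s ∈ B ∧ W s = -((N:ℝ)*h)}) := by
        rintro s (rfl | ⟨hsB, habs⟩)
        · exact Or.inl rfl
        · rcases (abs_eq hNh0.le).1 habs with h1 | h1
          exacts [Or.inr (Or.inl ⟨hsB, h1⟩), Or.inr (Or.inr ⟨hsB, h1⟩)]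
      exact Set.Countable.mono hsub ((Set.countable_singleton 0).union
        (((hfib _).countable).union ((hfib _).countable)))
    have haeZ : ∀ᵐ s ∂(volume.restrict B), ¬(s = 0 ∨ (s ∈ B ∧ |W s| = (N:ℝ)*h)) :=
      ae_restrict_of_ae (measure_eq_zero_iff_ae_notMem.mp (hcnt.measure_zero _))
    filter_upwards [ae_restrict_mem hBmeas, haeZ] with s hs hsZ hRs
    push_neg at hsZ
    obtain ⟨hs0, hsW⟩ := hsZ
    have hΦne : Φr s ≠ (N:ℝ)*h := by
      rw [hΦrW]
      exact hsW hs
    have hVs0 := hV0 s (hBI hs)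
    have hs2 : (N:ℝ)*h ≤ c₀ * s^2 := by
      have e : (Real.sqrt ((N:ℝ)/c₀) * Real.sqrt h)^2 = ((N:ℝ)/c₀)*h := by
        rw [mul_pow, Real.sq_sqrt (by positivity), Real.sq_sqrt hh0.le]
      have hsq : (Real.sqrt ((N:ℝ)/c₀) * Real.sqrt h)^2 ≤ |s|^2 :=
        pow_le_pow_left₀ (by positivity) hRs 2
      rw [e, sq_abs] at hsq
      calc (N:ℝ)*h = c₀ * (((N:ℝ)/c₀)*h) := by field_simp
        _ ≤ c₀ * s^2 := mul_le_mul_of_nonneg_left hsq hc₀.le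
    have hVs : (N:ℝ)*h ≤ V s := hs2.trans (hVlow s hs)
    have hΦgt : (N:ℝ)*h < Φr s := lt_of_le_of_ne (hs2.trans (hΦlow s hs)) (Ne.symm hΦne)
    have hme : min ε m ≤ ε := min_le_left _ _
    have hmm : min ε m ≤ m := min_le_right _ _
    rcases lt_or_ge (Φt s) (g s) with hlt | hle
    · obtain ⟨d, hd, hd2⟩ := hΦrd s hs hs0
      have hΦrc : ContinuousAt Φr s := hd.continuousAt
      have hev : ∀ᶠ x in 𝓝 s, (N:ℝ)*h < Φr x :=
        continuousAt_const.eventually_lt hΦrc hΦgt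
      have hΦrpos' : 0 < Φr s := lt_trans hNh0 hΦgt
      have hΦtd : HasDerivAt Φt (d * (1 - (N:ℝ)*h / Φr s)) s := by
        have hne : Φr s / h ≠ 0 := by positivity
        have hcore : HasDerivAt (fun x => Φr x - (N:ℝ)*h * Real.log (Φr x / h))
            (d - (N:ℝ)*h * ((d/h) / (Φr s / h))) s :=
          hd.sub (((hd.div_const h).log hne).const_mul ((N:ℝ)*h))
        have veq : d - (N:ℝ)*h * ((d/h)/(Φr s/h)) = d * (1 - (N:ℝ)*h/Φr s) := by
          field_simp
        rw [veq] at hcore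
        apply hcore.congr_of_eventuallyEq
        filter_upwards [hev] with x hx
        rw [hΦtp x, max_eq_left ((le_div_iff₀ hh0).2 (by linarith))]
      have hdΦh : deriv Φh s = d * (1 - (N:ℝ)*h/Φr s) := by
        rw [hminΦt s hs hlt, hΦtd.deriv]
      set a := (N:ℝ)*h/Φr s with ha
      have ha0 : 0 < a := div_pos hNh0 hΦrpos'
      have ha1 : a < 1 := (div_lt_one hΦrpos').2 hΦgt
      have hVa : m * ((N:ℝ)*h) ≤ V s * a := by
        have hmf := hminf s hs hs0
        calc m*((N:ℝ)*h) ≤ (V s/Φr s) * ((N:ℝ)*h) :=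
              mul_le_mul_of_nonneg_right hmf hNh0.le
          _ = V s * a := by rw [ha, div_mul_eq_mul_div, mul_div_assoc]
      rw [hdΦh]
      have hexp : V s - (d * (1 - a))^2 = V s * a * (2 - a) := by
        calc V s - (d * (1 - a))^2 = V s - d^2*(1-a)^2 := by ring
          _ = V s - V s*(1-a)^2 := by rw [hd2]
          _ = V s * a * (2-a) := by ring
      rw [hexp]
      have h2a : V s * a ≤ V s * a * (2 - a) := by
        nlinarith [mul_nonneg (mul_nonneg hVs0 ha0.le) (sub_nonneg.2 ha1.le)]
      have hmin : (N:ℝ)*(min ε m)*h ≤ m*((N:ℝ)*h) := by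
        calc (N:ℝ)*(min ε m)*h = (min ε m)*((N:ℝ)*h) := by ring
          _ ≤ m*((N:ℝ)*h) := mul_le_mul_of_nonneg_right hmm hNh0.le
      linarith
    · have hsq := hgle s hs hle
      have h1 : ε * ((N:ℝ)*h) ≤ ε * V s := mul_le_mul_of_nonneg_left hVs hε0.le
      have h2 : (min ε m) * ((N:ℝ)*h) ≤ ε * ((N:ℝ)*h) :=
        mul_le_mul_of_nonneg_right hme hNh0.le
      nlinarith [h1, h2]
end

section
/- Let K be a compact set with K ⊂ (−(π−2η), π−2η). For every N ∈ ℕ* there exists ε₀ > 0 such that for every ε ∈ (0, ε₀) there exists h₀ > 0 such that for every h ∈ (0, h₀): (1) Φ̂_{N,h}(s) ≤ Φ_r(s) for all s ∈ [−(π−η), π−η]; (2) Φ̂_{N,h}(s) = Φ̃_{N,h}(s) for all s ∈ K; (3) Φ̂_{N,h}(s) = √(1−ε) Φ_r(s) for all s ∈ supp χ'. (Lemma 2.6.) -/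
open MeasureTheory Real

/-- The Agmon distance to the well at `0`: `Φ_r(s) = |∫₀ˢ √(V(σ)) dσ|`. -/
noncomputable def PhiR (V : ℝ → ℝ) (s : ℝ) : ℝ := |∫ σ in (0:ℝ)..s, Real.sqrt (V σ)|

/-- The precised weight `Φ̃_{N,h} = Φ_r − Nh ln(max(Φ_r/h, N))`. -/
noncomputable def PhiT (V : ℝ → ℝ) (N : ℕ) (h s : ℝ) : ℝ :=
  PhiR V s - N * h * Real.log (max (PhiR V s / h) N)

/-- The intermediate weight
`Φ̂_{N,h}(s) = min(Φ̃_{N,h}(s), √(1−ε) inf_{t ∈ supp χ'} (Φ_r(t) + |∫ₛᵗ √V|))`. -/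
noncomputable def PhiH (V : ℝ → ℝ) (χ : ℝ → ℝ) (N : ℕ) (ε h s : ℝ) : ℝ :=
  min (PhiT V N h s) (Real.sqrt (1 - ε) *
    sInf ((fun t => PhiR V t + |∫ σ in s..t, Real.sqrt (V σ)|) '' tsupport (deriv χ)))

set_option maxHeartbeats 2000000

/-- Lemma 2.6: for a compact `K ⊂ (−(π−2η), π−2η)` and `N ∈ ℕ*`, for `ε` then `h` small:
(1) `Φ̂_{N,h} ≤ Φ_r` on `[−(π−η), π−η]`; (2) `Φ̂_{N,h} = Φ̃_{N,h}` on `K`;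
(3) `Φ̂_{N,h} = √(1−ε) Φ_r` on `supp χ'`. -/
theorem stmt_10 (η : ℝ) (hη : η ∈ Set.Ioo 0 (π / 2))
    (B : Set ℝ) (hB : B = Set.Ioo (-(π - η)) (π - η))
    (V : ℝ → ℝ) (hVc : ContinuousOn V (Set.Icc (-(π - η)) (π - η)))
    (hV0 : V 0 = 0) (hVpos : ∀ s ∈ B, s ≠ 0 → 0 < V s)
    (χ : ℝ → ℝ) (hχ : ContDiff ℝ (⊤ : ℕ∞) χ) (hχsupp : tsupport χ ⊆ B)
    (hχ01 : ∀ s, χ s ∈ Set.Icc (0:ℝ) 1)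
    (hχ1 : ∀ s ∈ Set.Ioo (-(π - 2 * η)) (π - 2 * η), χ s = 1)
    (K : Set ℝ) (hK : IsCompact K) (hKsub : K ⊆ Set.Ioo (-(π - 2 * η)) (π - 2 * η)) :
    ∀ N : ℕ, 1 ≤ N → ∃ ε₀ > (0:ℝ), ∀ ε : ℝ, 0 < ε → ε < ε₀ →
      ∃ h₀ > (0:ℝ), ∀ h : ℝ, 0 < h → h < h₀ →
        (∀ s ∈ Set.Icc (-(π - η)) (π - η), PhiH V χ N ε h s ≤ PhiR V s) ∧
        (∀ s ∈ K, PhiH V χ N ε h s = PhiT V N h s) ∧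
        (∀ s ∈ tsupport (deriv χ), PhiH V χ N ε h s = Real.sqrt (1 - ε) * PhiR V s) := by
  intro N hN
  obtain ⟨hη0, hη2⟩ := hη
  subst hB
  have hN1 : (1:ℝ) ≤ (N:ℝ) := by exact_mod_cast hN
  set b := π - η with hbdef
  set a := π - 2 * η with hadef
  have ha0 : 0 < a := by rw [hadef]; linarith
  have hab : a < b := by rw [hadef, hbdef]; linarith
  have hb0 : 0 < b := lt_trans ha0 hab
  have hIcc0 : (0:ℝ) ∈ Set.Icc (-b) b := ⟨by linarith, hb0.le⟩
  have haIcc : a ∈ Set.Icc (-b) b := ⟨by linarith, hab.le⟩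
  have hnaIcc : -a ∈ Set.Icc (-b) b := ⟨by linarith, by linarith⟩
  have hbIcc : b ∈ Set.Icc (-b) b := ⟨by linarith, le_refl b⟩
  have hnbIcc : -b ∈ Set.Icc (-b) b := ⟨le_refl _, by linarith⟩
  have hfc : ContinuousOn (fun σ => Real.sqrt (V σ)) (Set.Icc (-b) b) :=
    Real.continuous_sqrt.comp_continuousOn hVc
  have hInt : ∀ x ∈ Set.Icc (-b) b, ∀ y ∈ Set.Icc (-b) b,
      IntervalIntegrable (fun σ => Real.sqrt (V σ)) volume x y := fun x hx y hy =>
    (hfc.mono (Set.uIcc_subset_Icc hx hy)).intervalIntegrable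
  set F : ℝ → ℝ := fun x => ∫ σ in (0:ℝ)..x, Real.sqrt (V σ) with hFdef
  have hPhiR : ∀ s, PhiR V s = |F s| := fun s => rfl
  have hPhiR_nn : ∀ u, 0 ≤ PhiR V u := fun u => by rw [hPhiR]; exact abs_nonneg _
  have hFsub : ∀ x ∈ Set.Icc (-b) b, ∀ y ∈ Set.Icc (-b) b,
      (∫ σ in x..y, Real.sqrt (V σ)) = F y - F x := by
    intro x hx y hy
    rw [hFdef]
    exact (intervalIntegral.integral_interval_sub_left (hInt 0 hIcc0 y hy)
      (hInt 0 hIcc0 x hx)).symm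
  have hF0 : F 0 = 0 := intervalIntegral.integral_same
  have hFmono : ∀ x ∈ Set.Icc (-b) b, ∀ y ∈ Set.Icc (-b) b, x ≤ y → F x ≤ F y := by
    intro x hx y hy hxy
    have h1 := intervalIntegral.integral_nonneg (μ := volume) hxy
      (fun u _ => Real.sqrt_nonneg (V u))
    rw [hFsub x hx y hy] at h1; linarith
  have hFpos : ∀ x ∈ Set.Icc (-b) b, ∀ y ∈ Set.Icc (-b) b, x < y →
      (∀ u ∈ Set.Ioo x y, u ∈ Set.Ioo (-b) b ∧ u ≠ 0) → F x < F y := by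
    intro x hx y hy hxy hu
    have hp := intervalIntegral.intervalIntegral_pos_of_pos_on (hInt x hx y hy)
      (fun u hu' => Real.sqrt_pos.mpr (hVpos u (hu u hu').1 (hu u hu').2)) hxy
    rw [hFsub x hx y hy] at hp; linarith
  clear_value F
  -- facts about S = tsupport (deriv χ)
  set S := tsupport (deriv χ) with hSdef
  have hs_supp : S ⊆ Set.Icc (-b) b := by
    have h1 : S ⊆ tsupport χ := closure_minimal (support_deriv_subset) (isClosed_tsupport χ)
    exact fun x hx => Set.Ioo_subset_Icc_self (hχsupp (h1 hx))
  have hderiv0 : ∀ x ∈ Set.Ioo (-a) a, deriv χ x = 0 := by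
    intro x hx
    have hev : χ =ᶠ[nhds x] fun _ => 1 :=
      Filter.eventuallyEq_of_mem (Ioo_mem_nhds hx.1 hx.2) (fun y hy => hχ1 y hy)
    rw [hev.deriv_eq]; exact deriv_const x 1
  have hs_away : ∀ t ∈ S, t ≤ -a ∨ a ≤ t := by
    intro t ht
    by_contra hcon
    push_neg at hcon
    have hsub : S ⊆ (Set.Ioo (-a) a)ᶜ :=
      closure_minimal (fun x hx hmem => hx (hderiv0 x hmem)) isOpen_Ioo.isClosed_compl
    exact hsub ht ⟨hcon.1, hcon.2⟩
  have hS_ne : S.Nonempty := by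
    by_contra hcon
    rw [Set.not_nonempty_iff_eq_empty] at hcon
    have hd0 : ∀ x, deriv χ x = 0 := by
      intro x
      by_contra hx
      have hmem : x ∈ S := subset_tsupport _ hx
      rw [hcon] at hmem; exact hmem
    have hconst := is_const_of_deriv_eq_zero (hχ.differentiable (by simp)) hd0
    have h1 : χ 0 = 1 := hχ1 0 ⟨by linarith, ha0⟩
    have h2 : χ b = 0 := by
      apply image_eq_zero_of_notMem_tsupport
      intro hb
      exact absurd (hχsupp hb).2 (lt_irrefl b)
    have h3 := hconst 0 b; rw [h1, h2] at h3; norm_num at h3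
  -- bounds m and M
  set M := F b - F (-b) with hMdef
  have hFbnn : 0 ≤ F b := by have := hFmono 0 hIcc0 b hbIcc hb0.le; rw [hF0] at this; exact this
  have hFnbnp : F (-b) ≤ 0 := by
    have := hFmono (-b) hnbIcc 0 hIcc0 (by linarith); rw [hF0] at this; exact this
  have hM0 : 0 ≤ M := by rw [hMdef]; linarith
  have hM : ∀ s ∈ Set.Icc (-b) b, PhiR V s ≤ M := by
    intro s hs
    rw [hPhiR, abs_le]
    have h1 := hFmono (-b) hnbIcc s hs hs.1
    have h2 := hFmono s hs b hbIcc hs.2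
    constructor <;> [skip; skip] <;> rw [hMdef] <;> linarith
  have hFa : 0 < F a := by
    have := hFpos 0 hIcc0 a haIcc ha0
      (fun u hu => ⟨⟨by linarith [hu.1], by linarith [hu.2]⟩, ne_of_gt hu.1⟩)
    rw [hF0] at this; exact this
  have hFna : F (-a) < 0 := by
    have := hFpos (-a) hnaIcc 0 hIcc0 (by linarith)
      (fun u hu => ⟨⟨by linarith [hu.1], by linarith [hu.2]⟩, ne_of_lt hu.2⟩)
    rw [hF0] at this; exact this
  set m := min (F a) (-F (-a)) with hmdef
  have hm0 : 0 < m := lt_min hFa (by linarith)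
  have hm_S : ∀ t ∈ S, m ≤ PhiR V t := by
    intro t ht
    rw [hPhiR]
    rcases hs_away t ht with h | h
    · have h1 : F t ≤ F (-a) := hFmono t (hs_supp ht) (-a) hnaIcc h
      have h2 : m ≤ -F (-a) := min_le_right _ _
      have h3 := neg_le_abs (F t)
      linarith
    · have h1 : F a ≤ F t := hFmono a haIcc t (hs_supp ht) h
      have h2 : m ≤ F a := min_le_left _ _
      have h3 := le_abs_self (F t)
      linarith
  -- the radius k containing K
  obtain ⟨k, hk0, hka, hkK⟩ : ∃ k, 0 ≤ k ∧ k < a ∧ ∀ s ∈ K, -k ≤ s ∧ s ≤ k := by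
    rcases K.eq_empty_or_nonempty with hKe | hKne
    · exact ⟨0, le_refl 0, ha0, by simp [hKe]⟩
    · have hsup := hK.sSup_mem hKne
      have hinf := hK.sInf_mem hKne
      refine ⟨max (max (sSup K) (-sInf K)) 0, le_max_right _ _, ?_, ?_⟩
      · have h1 : sSup K < a := (hKsub hsup).2
        have h2 : -a < sInf K := (hKsub hinf).1
        simp only [max_lt_iff]
        exact ⟨⟨h1, by linarith⟩, ha0⟩
      · intro s hs
        have h1 : s ≤ sSup K := le_csSup hK.bddAbove hs
        have h2 : sInf K ≤ s := csInf_le hK.bddBelow hs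
        have h3 : -sInf K ≤ max (max (sSup K) (-sInf K)) 0 :=
          le_max_of_le_left (le_max_right _ _)
        have h4 : sSup K ≤ max (max (sSup K) (-sInf K)) 0 :=
          le_max_of_le_left (le_max_left _ _)
        exact ⟨by linarith, by linarith⟩
  have hkIcc : k ∈ Set.Icc (-b) b := ⟨by linarith, by linarith⟩
  have hnkIcc : -k ∈ Set.Icc (-b) b := ⟨by linarith, by linarith⟩
  have hKsubIcc : K ⊆ Set.Icc (-b) b := fun s hs =>
    ⟨by linarith [(hKsub hs).1], by linarith [(hKsub hs).2]⟩
  have hFk : F k < F a := hFpos k hkIcc a haIcc hka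
    (fun u hu => ⟨⟨by linarith [hu.1], by linarith [hu.2]⟩, ne_of_gt (by linarith [hu.1])⟩)
  have hFnk : F (-a) < F (-k) := hFpos (-a) hnaIcc (-k) hnkIcc (by linarith)
    (fun u hu => ⟨⟨by linarith [hu.1], by linarith [hu.2]⟩, ne_of_lt (by linarith [hu.2])⟩)
  set c := min (F a - F k) (F (-k) - F (-a)) with hcdef
  have hc0 : 0 < c := lt_min (by linarith) (by linarith)
  have hFk0 : 0 ≤ F k := by
    have := hFmono 0 hIcc0 k hkIcc hk0; rw [hF0] at this; exact this
  have hFnk0 : F (-k) ≤ 0 := by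
    have := hFmono (-k) hnkIcc 0 hIcc0 (by linarith); rw [hF0] at this; exact this
  -- triangle inequality
  have htri : ∀ s ∈ Set.Icc (-b) b, ∀ t ∈ Set.Icc (-b) b,
      PhiR V s ≤ PhiR V t + |∫ σ in s..t, Real.sqrt (V σ)| := by
    intro s hs t ht
    rw [hPhiR, hPhiR, hFsub s hs t ht]
    have h1 := abs_sub_abs_le_abs_sub (F s) (F t)
    have h2 := abs_sub_comm (F s) (F t)
    linarith
  -- key inequality for K
  have key2 : ∀ s ∈ K, ∀ t ∈ S,
      PhiR V s + 2 * c ≤ PhiR V t + |∫ σ in s..t, Real.sqrt (V σ)| := by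
    intro s hs t ht
    have hsIcc := hKsubIcc hs
    have htIcc := hs_supp ht
    obtain ⟨hsk1, hsk2⟩ := hkK s hs
    rw [hPhiR, hPhiR, hFsub s hsIcc t htIcc]
    have hck : c ≤ F a - F k := min_le_left _ _
    have hck' : c ≤ F (-k) - F (-a) := min_le_right _ _
    rcases hs_away t ht with hta | hta
    · have h1 : F t ≤ F (-a) := hFmono t htIcc (-a) hnaIcc hta
      have h2 : F (-k) ≤ F s := hFmono (-k) hnkIcc s hsIcc hsk1
      have h3 : |F t| = -F t := abs_of_neg (by linarith)
      have h4 : |F t - F s| = F s - F t := by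
        rw [abs_of_nonpos (by linarith)]; ring
      rcases abs_cases (F s) with ⟨he, hsgn⟩ | ⟨he, hsgn⟩ <;> rw [h3, h4, he] <;> linarith
    · have h1 : F a ≤ F t := hFmono a haIcc t htIcc hta
      have h2 : F s ≤ F k := hFmono s hsIcc k hkIcc hsk2
      have h3 : |F t| = F t := abs_of_pos (by linarith)
      have h4 : |F t - F s| = F t - F s := abs_of_nonneg (by linarith)
      rcases abs_cases (F s) with ⟨he, hsgn⟩ | ⟨he, hsgn⟩ <;> rw [h3, h4, he] <;> linarith
  -- boundedness of the image sets
  have hbdd : ∀ s, BddBelow ((fun t => PhiR V t + |∫ σ in s..t, Real.sqrt (V σ)|) '' S) := by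
    intro s
    refine ⟨0, ?_⟩
    rintro y ⟨t, -, rfl⟩
    exact add_nonneg (hPhiR_nn t) (abs_nonneg _)
  -- choose ε₀
  refine ⟨min (1/2) (c / (M + 1)), lt_min (by norm_num) (div_pos hc0 (by linarith)), ?_⟩
  intro ε hε0 hεlt
  have hε2 : ε < 1/2 := lt_of_lt_of_le hεlt (min_le_left _ _)
  have hεc : ε * (M + 1) < c :=
    (lt_div_iff₀ (by linarith : (0:ℝ) < M + 1)).mp (lt_of_lt_of_le hεlt (min_le_right _ _))
  have h1ε : 0 < 1 - ε := by linarith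
  set s1 := Real.sqrt (1 - ε) with hs1def
  have hs1pos : 0 < s1 := Real.sqrt_pos.mpr h1ε
  have hs1lt : s1 < 1 := by
    rw [hs1def]
    calc Real.sqrt (1 - ε) < Real.sqrt 1 := Real.sqrt_lt_sqrt (by linarith) (by linarith)
    _ = 1 := Real.sqrt_one
  have hs1ge : 1 - ε ≤ s1 := by
    rw [hs1def]
    calc 1 - ε = Real.sqrt ((1 - ε) ^ 2) := (Real.sqrt_sq h1ε.le).symm
    _ ≤ Real.sqrt (1 - ε) := Real.sqrt_le_sqrt (by nlinarith)
  have hδpos : 0 < 1 - s1 := by linarith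
  -- choose h₀
  have hMN : 0 < M + (N:ℝ) := by linarith
  have hsMN : 0 < Real.sqrt (M + (N:ℝ)) := Real.sqrt_pos.mpr hMN
  set C := (1 - s1) * m / (2 * (N:ℝ) * Real.sqrt (M + (N:ℝ))) with hCdef
  have hC0 : 0 < C :=
    div_pos (mul_pos hδpos hm0) (mul_pos (mul_pos two_pos (by linarith)) hsMN)
  refine ⟨min 1 (C ^ 2), lt_min one_pos (pow_pos hC0 2), ?_⟩
  intro h hh0 hhlt
  have hh1 : h ≤ 1 := le_of_lt (lt_of_lt_of_le hhlt (min_le_left _ _))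
  have hhC : Real.sqrt h ≤ C := by
    calc Real.sqrt h ≤ Real.sqrt (C ^ 2) :=
      Real.sqrt_le_sqrt (le_of_lt (lt_of_lt_of_le hhlt (min_le_right _ _)))
    _ = C := Real.sqrt_sq hC0.le
  -- the kernel smallness estimate
  have hkern : ∀ s ∈ Set.Icc (-b) b,
      (N:ℝ) * h * Real.log (max (PhiR V s / h) (N:ℝ)) ≤ (1 - s1) * m := by
    intro s hs
    have hPs := hM s hs
    have hP0 := hPhiR_nn s
    have hmaxpos : (0:ℝ) < max (PhiR V s / h) (N:ℝ) :=
      lt_of_lt_of_le (by linarith : (0:ℝ) < (N:ℝ)) (le_max_right _ _)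
    have hmaxle : max (PhiR V s / h) (N:ℝ) ≤ (M + N) / h := by
      apply max_le
      · exact (div_le_div_iff_of_pos_right hh0).mpr (by linarith)
      · rw [le_div_iff₀ hh0]
        have : (N:ℝ) * h ≤ (N:ℝ) * 1 :=
          mul_le_mul_of_nonneg_left hh1 (by linarith)
        linarith
    have hlog1 : Real.log (max (PhiR V s / h) (N:ℝ)) ≤ Real.log ((M + N) / h) :=
      Real.log_le_log hmaxpos hmaxle
    have hx : 0 < (M + (N:ℝ)) / h := div_pos hMN hh0
    have hlog2 : Real.log ((M + N) / h) ≤ 2 * Real.sqrt ((M + N) / h) := by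
      have h1 : Real.log (Real.sqrt ((M + N) / h)) ≤ Real.sqrt ((M + N) / h) - 1 :=
        Real.log_le_sub_one_of_pos (Real.sqrt_pos.mpr hx)
      have h2 : Real.log ((M + (N:ℝ)) / h) = 2 * Real.log (Real.sqrt ((M + N) / h)) := by
        rw [Real.log_sqrt hx.le]; ring
      have h3 : (0:ℝ) ≤ Real.sqrt ((M + N) / h) := Real.sqrt_nonneg _
      linarith
    have hNh0 : 0 ≤ (N:ℝ) * h := mul_nonneg (by linarith) hh0.le
    have hsd : Real.sqrt ((M + (N:ℝ)) / h) = Real.sqrt (M + N) / Real.sqrt h :=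
      Real.sqrt_div hMN.le h
    have hds : h / Real.sqrt h = Real.sqrt h := Real.div_sqrt
    calc (N:ℝ) * h * Real.log (max (PhiR V s / h) (N:ℝ))
        ≤ (N:ℝ) * h * (2 * Real.sqrt ((M + N) / h)) :=
          mul_le_mul_of_nonneg_left (le_trans hlog1 hlog2) hNh0
      _ = 2 * (N:ℝ) * Real.sqrt (M + N) * (h / Real.sqrt h) := by rw [hsd]; ring
      _ = 2 * (N:ℝ) * Real.sqrt (M + N) * Real.sqrt h := by rw [hds]
      _ ≤ 2 * (N:ℝ) * Real.sqrt (M + N) * C := by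
          apply mul_le_mul_of_nonneg_left hhC
          positivity
      _ = (1 - s1) * m := by
          rw [hCdef, mul_comm]
          exact div_mul_cancel₀ _ (by positivity)
  -- PhiT basic facts
  have hPhiT_def : ∀ s, PhiT V N h s
      = PhiR V s - (N:ℝ) * h * Real.log (max (PhiR V s / h) (N:ℝ)) := fun s => rfl
  have hPhiT_le : ∀ s, PhiT V N h s ≤ PhiR V s := by
    intro s
    rw [hPhiT_def]
    have hlnn : 0 ≤ Real.log (max (PhiR V s / h) (N:ℝ)) :=
      Real.log_nonneg (le_trans hN1 (le_max_right _ _))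
    have hNh0 : 0 ≤ (N:ℝ) * h := mul_nonneg (by linarith) hh0.le
    have := mul_nonneg hNh0 hlnn
    linarith
  have hPhiH_def : ∀ s, PhiH V χ N ε h s = min (PhiT V N h s)
      (s1 * sInf ((fun t => PhiR V t + |∫ σ in s..t, Real.sqrt (V σ)|) '' S)) := by
    intro s
    rw [hs1def, hSdef]
    rfl
  clear_value b a S M m c C s1
  refine ⟨?_, ?_, ?_⟩
  · -- (1)
    intro s hs
    have h1 : PhiH V χ N ε h s ≤ PhiT V N h s := min_le_left _ _
    exact le_trans h1 (hPhiT_le s)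
  · -- (2)
    intro s hsK
    have hsIcc := hKsubIcc hsK
    have hd_ge : PhiR V s + 2 * c
        ≤ sInf ((fun t => PhiR V t + |∫ σ in s..t, Real.sqrt (V σ)|) '' S) := by
      apply le_csInf (hS_ne.image _)
      rintro y ⟨t, ht, rfl⟩
      exact key2 s hsK t ht
    have hmain : PhiT V N h s
        ≤ s1 * sInf ((fun t => PhiR V t + |∫ σ in s..t, Real.sqrt (V σ)|) '' S) := by
      have h1 : s1 * (PhiR V s + 2 * c)
          ≤ s1 * sInf ((fun t => PhiR V t + |∫ σ in s..t, Real.sqrt (V σ)|) '' S) :=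
        mul_le_mul_of_nonneg_left hd_ge hs1pos.le
      have h2 : PhiR V s ≤ s1 * (PhiR V s + 2 * c) := by
        have hPs := hM s hsIcc
        have hP0 := hPhiR_nn s
        have e1 : (1 - s1) * PhiR V s ≤ ε * PhiR V s :=
          mul_le_mul_of_nonneg_right (by linarith) hP0
        have e2 : ε * PhiR V s ≤ ε * M := mul_le_mul_of_nonneg_left hPs hε0.le
        have e3 : ε * M < c := by
          have : ε * (M + 1) = ε * M + ε := by ring
          linarith
        have e4 : c ≤ 2 * s1 * c := by
          have := mul_nonneg (show (0:ℝ) ≤ 2 * s1 - 1 by linarith) hc0.le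
          have hring : (2 * s1 - 1) * c = 2 * s1 * c - c := by ring
          linarith
        have e5 : s1 * (PhiR V s + 2 * c) = s1 * PhiR V s + 2 * s1 * c := by ring
        have e6 : (1 - s1) * PhiR V s = PhiR V s - s1 * PhiR V s := by ring
        linarith
      exact le_trans (le_trans (hPhiT_le s) h2) h1
    rw [hPhiH_def]
    exact min_eq_left hmain
  · -- (3)
    intro s hsS
    have hsIcc := hs_supp hsS
    have d_eq : sInf ((fun t => PhiR V t + |∫ σ in s..t, Real.sqrt (V σ)|) '' S)
        = PhiR V s := by
      apply le_antisymm
      · calc sInf ((fun t => PhiR V t + |∫ σ in s..t, Real.sqrt (V σ)|) '' S)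
            ≤ PhiR V s + |∫ σ in s..s, Real.sqrt (V σ)| :=
              csInf_le (hbdd s) (Set.mem_image_of_mem _ hsS)
          _ = PhiR V s := by simp
      · apply le_csInf (hS_ne.image _)
        rintro y ⟨t, ht, rfl⟩
        exact htri s hsIcc t (hs_supp ht)
    have hptle : s1 * PhiR V s ≤ PhiT V N h s := by
      have h1 := hkern s hsIcc
      have h2 := hm_S s hsS
      have h3 : (1 - s1) * m ≤ (1 - s1) * PhiR V s :=
        mul_le_mul_of_nonneg_left h2 hδpos.le
      rw [hPhiT_def]
      have e1 : s1 * PhiR V s = PhiR V s - (1 - s1) * PhiR V s := by ring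
      linarith
    rw [hPhiH_def, d_eq]
    exact min_eq_right hptle
end
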